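/- arXiv:2410.20094 — 8 statements merged into one kernel-verified Lean document; each statement's English description precedes it below -/
import Mathlib

section
/- For any set I of positive integers and any real number x ≥ 2, the product ∏_{i ∈ I} (1 - 1/x^i) lies in the interval [1/4, 1]. -/
open Finset

lemma weier (S : Finset ℕ) (f : ℕ → ℝ) (h0 : ∀ i, 0 ≤ f i) (h1 : ∀ i, f i ≤ 1) :
    1 - ∑ i ∈ S, f i ≤ ∏ i ∈ S, (1 - f i) := by
  induction S using Finset.cons_induction with
  | empty => simp
  | cons a s ha ih =>
    rw [Finset.prod_cons, Finset.sum_cons]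
    have hprod : (0:ℝ) ≤ ∏ i ∈ s, (1 - f i) :=
      Finset.prod_nonneg fun i _ => by linarith [h1 i]
    have hle : ∏ i ∈ s, (1 - f i) ≤ 1 :=
      Finset.prod_le_one (fun i _ => by linarith [h1 i]) (fun i _ => by linarith [h0 i])
    nlinarith [h0 a, h1 a, ih]

lemma sumbd (T : Finset ℕ) (hT : ∀ i ∈ T, 2 ≤ i) : ∑ i ∈ T, ((1:ℝ)/2)^i ≤ 1/2 := by
  have hsub : T ⊆ Finset.Ico 2 (T.sup id + 1) := by
    intro i hi
    simp only [Finset.mem_Ico]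
    exact ⟨hT i hi, Nat.lt_succ_of_le (Finset.le_sup (f := id) hi)⟩
  calc ∑ i ∈ T, ((1:ℝ)/2)^i ≤ ∑ i ∈ Finset.Ico 2 (T.sup id + 1), ((1:ℝ)/2)^i :=
        Finset.sum_le_sum_of_subset_of_nonneg hsub (fun i _ _ => by positivity)
    _ ≤ 1/2 := by
        rcases le_or_gt (T.sup id + 1) 2 with h | h
        · rw [Finset.Ico_eq_empty (by omega)]; norm_num
        · rw [geom_sum_Ico (by norm_num : ((1:ℝ)/2) ≠ 1) (by omega)]
          have : ((1:ℝ)/2) ^ (T.sup id + 1) ≥ 0 := by positivity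
          have h2 : ((1:ℝ)/2)^2 = 1/4 := by norm_num
          rw [div_le_iff_of_neg (by norm_num : ((1:ℝ)/2 - 1) < 0)]
          nlinarith

lemma key (S : Finset ℕ) (hS : ∀ i ∈ S, 0 < i) (x : ℝ) (hx : 2 ≤ x) :
    1/4 ≤ ∏ i ∈ S, (1 - 1/x^i) := by
  have hx0 : (0:ℝ) < x := by linarith
  have step1 : ∏ i ∈ S, (1 - ((1:ℝ)/2)^i) ≤ ∏ i ∈ S, (1 - 1/x^i) := by
    apply Finset.prod_le_prod
    · intro i _
      have : ((1:ℝ)/2)^i ≤ 1 := pow_le_one₀ (by norm_num) (by norm_num)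
      linarith
    · intro i _
      have h2 : (2:ℝ)^i ≤ x^i := pow_le_pow_left₀ (by norm_num) hx i
      have h2p : (0:ℝ) < 2^i := by positivity
      have : 1/x^i ≤ ((1:ℝ)/2)^i := by
        rw [one_div_pow]
        exact one_div_le_one_div_of_le h2p h2
      linarith
  refine le_trans ?_ step1
  -- now bound ∏ (1 - (1/2)^i) ≥ 1/4
  have htail : ∀ T : Finset ℕ, (∀ i ∈ T, 2 ≤ i) → (1:ℝ)/2 ≤ ∏ i ∈ T, (1 - ((1:ℝ)/2)^i) := by
    intro T hT
    have := weier T (fun i => ((1:ℝ)/2)^i) (fun i => by positivity)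
      (fun i => pow_le_one₀ (by norm_num) (by norm_num))
    have := sumbd T hT
    linarith
  by_cases h1 : 1 ∈ S
  · have hT : ∀ i ∈ S.erase 1, 2 ≤ i := by
      intro i hi
      have := Finset.mem_of_mem_erase hi
      have := Finset.ne_of_mem_erase hi
      have := hS i ‹i ∈ S›
      omega
    have := htail (S.erase 1) hT
    rw [← Finset.mul_prod_erase S _ h1]
    have hpos : (0:ℝ) ≤ ∏ i ∈ S.erase 1, (1 - ((1:ℝ)/2)^i) := by
      apply Finset.prod_nonneg
      intro i _
      have : ((1:ℝ)/2)^i ≤ 1 := pow_le_one₀ (by norm_num) (by norm_num)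
      linarith
    nlinarith
  · have hT : ∀ i ∈ S, 2 ≤ i := by
      intro i hi
      have := hS i hi
      rcases Nat.lt_or_ge i 2 with h | h
      · interval_cases i <;> simp_all
      · exact h
    have := htail S hT
    linarith

theorem stmt0 (I : Set ℕ) (hI : ∀ i ∈ I, 0 < i) (x : ℝ) (hx : 2 ≤ x) :
    1 / 4 ≤ (∏' i : I, (1 - 1 / x ^ (i : ℕ))) ∧ (∏' i : I, (1 - 1 / x ^ (i : ℕ))) ≤ 1 := by
  set f : I → ℝ := fun i => 1 - 1 / x ^ (i : ℕ) with hf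
  have hx0 : (0:ℝ) < x := by linarith
  have hfle : ∀ i : I, f i ≤ 1 := by
    intro i
    have : 0 < x ^ (i:ℕ) := by positivity
    have : 0 < 1 / x ^ (i:ℕ) := by positivity
    simp only [hf]; linarith
  have hbound : ∀ s : Finset I, 1/4 ≤ ∏ i ∈ s, f i ∧ ∏ i ∈ s, f i ≤ 1 := by
    intro s
    have hlow : 1/4 ≤ ∏ i ∈ s, f i := by
      have himg : ∏ i ∈ s, f i = ∏ j ∈ s.image (fun i : I => (i:ℕ)), (1 - 1/x^j) := by
        rw [Finset.prod_image]
        intro a _ b _ h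
        exact Subtype.coe_injective h
      rw [himg]
      exact key _ (fun j hj => by
        obtain ⟨a, _, rfl⟩ := Finset.mem_image.mp hj
        exact hI a a.2) x hx
    refine ⟨hlow, Finset.prod_le_one (fun i _ => ?_) (fun i _ => hfle i)⟩
    have h1 : (1:ℝ) ≤ x ^ (i:ℕ) := one_le_pow₀ (by linarith)
    have : 1 / x ^ (i:ℕ) ≤ 1 := by
      rw [div_le_one (by linarith)]; exact h1
    simp only [hf]; linarith
  by_cases hm : Multipliable f
  · have hp : HasProd f (∏' i : I, f i) := hm.hasProd
    constructor
    · exact ge_of_tendsto' hp (fun s => (hbound s).1)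
    · exact le_of_tendsto' hp (fun s => (hbound s).2)
  · rw [tprod_eq_one_of_not_multipliable hm]
    norm_num
end

section
/- For any integers n ≥ m ≥ 0 and any real number q ≥ 2, the Gaussian binomial coefficient satisfies q^{m(n-m)} ≤ binom(n,m)_q ≤ 4·q^{m(n-m)}. -/
lemma key_s1 (x : ℝ) (hx0 : 0 ≤ x) (hx : x ≤ 1/2) (m : ℕ) :
    1/4 + x^(m+1) ≤ ∏ j ∈ Finset.range m, (1 - x^(j+1)) := by
  induction m with
  | zero => simp; linarith
  | succ m ih =>
    rw [Finset.prod_range_succ]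
    match m, ih with
    | 0, _ => simp; nlinarith
    | (k+1), ih =>
      have h1 : 0 ≤ x^(k+1+1) := pow_nonneg hx0 _
      have h2 : x^(k+1+1) ≤ 1/4 := by
        calc x^(k+1+1) ≤ x^2 := pow_le_pow_of_le_one hx0 (by linarith) (by omega)
        _ ≤ (1/2)^2 := by nlinarith
        _ = 1/4 := by norm_num
      have h3 : x^(k+1+1+1) = x * x^(k+1+1) := by ring
      have h4 : 0 ≤ 1 - x^(k+1+1) := by linarith
      nlinarith [mul_le_mul_of_nonneg_right ih h4]

lemma key2 (q : ℝ) (hq : 2 ≤ q) (m : ℕ) :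
    (1:ℝ)/4 ≤ ∏ i ∈ Finset.range m, (1 - (1/q)^(m-i)) := by
  have hq0 : (0:ℝ) < q := by linarith
  have hx0 : (0:ℝ) ≤ 1/q := by positivity
  have hx : (1:ℝ)/q ≤ 1/2 := by
    rw [div_le_div_iff₀ hq0 (by norm_num)]; linarith
  have h := key_s1 (1/q) hx0 hx m
  have hrefl : ∏ i ∈ Finset.range m, (1 - (1/q)^(m-i))
      = ∏ j ∈ Finset.range m, (1 - (1/q)^(j+1)) := by
    rw [← Finset.prod_range_reflect]
    apply Finset.prod_congr rfl
    intro j hj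
    simp only [Finset.mem_range] at hj
    have : m - (m - 1 - j) = j + 1 := by omega
    rw [this]
  rw [hrefl]
  have : (0:ℝ) ≤ (1/q)^(m+1) := by positivity
  linarith

/-- The Gaussian binomial coefficient `binom(n,m)_q` for a real `q`. -/
noncomputable def gaussBinom (q : ℝ) (n m : ℕ) : ℝ :=
  ∏ i ∈ Finset.range m, (q ^ (n - i) - 1) / (q ^ (m - i) - 1)

theorem stmt1 (n m : ℕ) (hmn : m ≤ n) (q : ℝ) (hq : 2 ≤ q) :
    q ^ (m * (n - m)) ≤ gaussBinom q n m ∧ gaussBinom q n m ≤ 4 * q ^ (m * (n - m)) := by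
  have hq0 : (0:ℝ) < q := by linarith
  have hq1 : (1:ℝ) ≤ q := by linarith
  have hpow1 : ∀ k : ℕ, (1:ℝ) ≤ q ^ k := fun k => one_le_pow₀ hq1
  have hden : ∀ i, i ∈ Finset.range m → (0:ℝ) < q ^ (m - i) - 1 := by
    intro i hi
    simp only [Finset.mem_range] at hi
    have : (1:ℝ) < q ^ (m - i) := by
      calc (1:ℝ) < 2 := by norm_num
      _ ≤ q := hq
      _ = q ^ 1 := (pow_one q).symm
      _ ≤ q ^ (m - i) := pow_le_pow_right₀ hq1 (by omega)
    linarith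
  have hsplit : ∀ i, i ∈ Finset.range m → q ^ (n - i) = q ^ (n - m) * q ^ (m - i) := by
    intro i hi
    simp only [Finset.mem_range] at hi
    rw [← pow_add]
    congr 1
    omega
  constructor
  · -- lower bound
    rw [show m * (n - m) = (n - m) * m by ring, pow_mul]
    calc (q ^ (n - m)) ^ m = ∏ _i ∈ Finset.range m, q ^ (n - m) := by
          rw [Finset.prod_const, Finset.card_range]
    _ ≤ gaussBinom q n m := by
        apply Finset.prod_le_prod
        · intro i _; positivity
        · intro i hi
          rw [le_div_iff₀ (hden i hi)]
          have h1 := hpow1 (n - m)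
          nlinarith [hsplit i hi]
  · -- upper bound
    have step1 : gaussBinom q n m ≤
        ∏ i ∈ Finset.range m, (q ^ (n - m) * (q ^ (m - i) / (q ^ (m - i) - 1))) := by
      apply Finset.prod_le_prod
      · intro i hi
        have h1 := hden i hi
        have h2 := hpow1 (n - i)
        apply div_nonneg (by linarith) (by linarith)
      · intro i hi
        have heq : q ^ (n - m) * (q ^ (m - i) / (q ^ (m - i) - 1))
            = q ^ (n - i) / (q ^ (m - i) - 1) := by
          rw [hsplit i hi]; ring
        rw [heq]
        gcongr
        · exact le_of_lt (hden i hi)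
        · linarith
    have step2 : ∏ i ∈ Finset.range m, (q ^ (n - m) * (q ^ (m - i) / (q ^ (m - i) - 1)))
        = q ^ (m * (n - m)) * ∏ i ∈ Finset.range m, (q ^ (m - i) / (q ^ (m - i) - 1)) := by
      rw [Finset.prod_mul_distrib, Finset.prod_const, Finset.card_range, ← pow_mul,
        mul_comm (n - m) m]
    have step3 : ∏ i ∈ Finset.range m, (q ^ (m - i) / (q ^ (m - i) - 1))
        = (∏ i ∈ Finset.range m, (1 - (1/q)^(m-i)))⁻¹ := by
      rw [← Finset.prod_inv_distrib]
      apply Finset.prod_congr rfl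
      intro i hi
      have hp : (0:ℝ) < q ^ (m - i) := pow_pos hq0 _
      rw [div_pow, one_pow, one_sub_div hp.ne', inv_div]
    have hP : (1:ℝ)/4 ≤ ∏ i ∈ Finset.range m, (1 - (1/q)^(m-i)) := key2 q hq m
    have hP4 : (∏ i ∈ Finset.range m, (1 - (1/q)^(m-i)))⁻¹ ≤ 4 := by
      rw [← inv_inv (4:ℝ)]
      apply inv_anti₀ (by norm_num)
      linarith
    calc gaussBinom q n m ≤ _ := step1
    _ = q ^ (m * (n - m)) * (∏ i ∈ Finset.range m, (1 - (1/q)^(m-i)))⁻¹ := by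
        rw [step2, step3]
    _ ≤ q ^ (m * (n - m)) * 4 := by
        apply mul_le_mul_of_nonneg_left hP4 (by positivity)
    _ = 4 * q ^ (m * (n - m)) := by ring
end

section
/- For any integer n ≥ 1, real q > 1, and real polynomial g of degree less than n, the sum ∑_{i=0}^{n} (-1)^i q^{binom(i,2)} · binom(n,i)_q · g(q^{-i}) equals 0. -/
open Finset

lemma gb_zero (q : ℝ) (n : ℕ) : gaussBinom q n 0 = 1 := by simp [gaussBinom]

lemma gb_succ_self (q : ℝ) (n : ℕ) : gaussBinom q n (n + 1) = 0 := by
  apply Finset.prod_eq_zero (Finset.mem_range.2 (Nat.lt_succ_self n))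
  simp

lemma gb_eq (q : ℝ) (n m : ℕ) :
    gaussBinom q n m =
      (∏ j ∈ range m, (q ^ (n - j) - 1)) / (∏ j ∈ range m, (q ^ (m - j) - 1)) := by
  rw [gaussBinom, Finset.prod_div_distrib]

lemma denom_ne_zero {q : ℝ} (hq : 1 < q) (m : ℕ) :
    (∏ j ∈ range m, (q ^ (m - j) - 1)) ≠ 0 := by
  apply Finset.prod_ne_zero_iff.2
  intro j hj
  have hj' : 1 ≤ m - j := by have := Finset.mem_range.1 hj; omega
  have : 1 < q ^ (m - j) := one_lt_pow₀ hq (by omega)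
  linarith

lemma gb_pascal {q : ℝ} (hq : 1 < q) (n i : ℕ) (hi : i ≤ n) :
    gaussBinom q (n + 1) (i + 1) =
      gaussBinom q n (i + 1) + q ^ (n - i) * gaussBinom q n i := by
  have htop1 : (∏ j ∈ range (i + 1), (q ^ (n + 1 - j) - 1)) =
      (∏ j ∈ range i, (q ^ (n - j) - 1)) * (q ^ (n + 1) - 1) := by
    rw [Finset.prod_range_succ' (fun j => (q ^ (n + 1 - j) - 1)) i]
    simp
  have htop2 : (∏ j ∈ range (i + 1), (q ^ (n - j) - 1)) =
      (∏ j ∈ range i, (q ^ (n - j) - 1)) * (q ^ (n - i) - 1) :=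
    Finset.prod_range_succ _ _
  have hfac : (∏ j ∈ range (i + 1), (q ^ (i + 1 - j) - 1)) =
      (∏ j ∈ range i, (q ^ (i - j) - 1)) * (q ^ (i + 1) - 1) := by
    rw [Finset.prod_range_succ' (fun j => (q ^ (i + 1 - j) - 1)) i]
    simp
  have hd1 := denom_ne_zero hq i
  have hd2 : q ^ (i + 1) - 1 ≠ 0 := by
    have : 1 < q ^ (i + 1) := one_lt_pow₀ hq (by omega)
    linarith
  have hpow : q ^ (n - i) * q ^ (i + 1) = q ^ (n + 1) := by
    rw [← pow_add]; congr 1; omega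
  rw [gb_eq, gb_eq, gb_eq, htop1, htop2, hfac, ← hpow]
  field_simp
  ring

lemma cauchy {q : ℝ} (hq : 1 < q) (n : ℕ) (t : ℝ) :
    ∑ i ∈ range (n + 1), q ^ (i.choose 2) * gaussBinom q n i * t ^ i =
      ∏ j ∈ range n, (1 + q ^ j * t) := by
  induction n with
  | zero => simp [gb_zero]
  | succ n ih =>
    rw [Finset.prod_range_succ, ← ih]
    rw [Finset.sum_range_succ' (fun i => q ^ (i.choose 2) * gaussBinom q (n + 1) i * t ^ i) (n + 1)]
    have h1 : ∀ i ∈ range (n + 1),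
        q ^ ((i + 1).choose 2) * gaussBinom q (n + 1) (i + 1) * t ^ (i + 1) =
          q ^ ((i + 1).choose 2) * gaussBinom q n (i + 1) * t ^ (i + 1) +
            q ^ (i.choose 2) * gaussBinom q n i * t ^ i * (q ^ n * t) := by
      intro i hi
      rw [gb_pascal hq n i (Nat.lt_succ_iff.1 (Finset.mem_range.1 hi))]
      have hc : (i + 1).choose 2 = i.choose 2 + i := by
        rw [show (i + 1).choose 2 = i.choose 1 + i.choose 2 from rfl, Nat.choose_one_right]
        omega
      have hpow : q ^ (n - i) * q ^ i = q ^ n := by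
        rw [← pow_add]; congr 1
        have := Nat.lt_succ_iff.1 (Finset.mem_range.1 hi); omega
      rw [hc, pow_add, pow_succ]
      linear_combination (q ^ i.choose 2 * gaussBinom q n i * t ^ i * t) * hpow
    rw [Finset.sum_congr rfl h1, Finset.sum_add_distrib, ← Finset.sum_mul]
    have key : (∑ i ∈ range (n + 1), q ^ ((i + 1).choose 2) * gaussBinom q n (i + 1) * t ^ (i + 1))
          + 1 = ∑ i ∈ range (n + 1), q ^ (i.choose 2) * gaussBinom q n i * t ^ i := by
      have h2 := Finset.sum_range_succ' (fun i => q ^ (i.choose 2) * gaussBinom q n i * t ^ i) (n + 1)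
      have h3 := Finset.sum_range_succ (fun i => q ^ (i.choose 2) * gaussBinom q n i * t ^ i) (n + 1)
      simp only [gb_succ_self, gb_zero] at h2 h3
      simp only [pow_zero, one_mul, mul_one, mul_zero, zero_mul, add_zero] at h2 h3
      rw [← h3, h2]
      norm_num
    simp only [gb_zero, pow_zero, one_mul, mul_one,
      Nat.choose_eq_zero_of_lt (show (0:ℕ) < 2 by norm_num)]
    linear_combination key

theorem stmt3 (n : ℕ) (hn : 1 ≤ n) (q : ℝ) (hq : 1 < q) (g : Polynomial ℝ)
    (hg : g.degree < n) :
    ∑ i ∈ Finset.range (n + 1),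
      (-1 : ℝ) ^ i * q ^ (i.choose 2) * gaussBinom q n i * g.eval (q⁻¹ ^ i) = 0 := by
  have hq0 : q ≠ 0 := by linarith
  have hdeg : g.natDegree < n := by
    by_cases h : g = 0
    · simpa [h] using (show 0 < n by omega)
    · exact (Polynomial.natDegree_lt_iff_degree_lt h).2 (by exact_mod_cast hg)
  have heval : ∀ i : ℕ, g.eval (q⁻¹ ^ i) = ∑ k ∈ range n, g.coeff k * (q⁻¹ ^ i) ^ k :=
    fun i => Polynomial.eval_eq_sum_range' hdeg _
  calc ∑ i ∈ Finset.range (n + 1),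
        (-1 : ℝ) ^ i * q ^ (i.choose 2) * gaussBinom q n i * g.eval (q⁻¹ ^ i)
      = ∑ k ∈ range n, g.coeff k *
          ∑ i ∈ range (n + 1), q ^ (i.choose 2) * gaussBinom q n i * (-(q⁻¹ ^ k)) ^ i := by
        simp only [heval, Finset.mul_sum]
        rw [Finset.sum_comm]
        refine Finset.sum_congr rfl fun k _ => ?_
        refine Finset.sum_congr rfl fun i _ => ?_
        have h1 : (-(q⁻¹ ^ k)) ^ i = (-1) ^ i * (q⁻¹ ^ k) ^ i := by rw [neg_pow]
        have h2 : (q⁻¹ ^ k) ^ i = (q⁻¹ ^ i) ^ k := by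
          rw [← pow_mul, ← pow_mul, Nat.mul_comm]
        rw [h1, h2]
        ring
    _ = 0 := by
        refine Finset.sum_eq_zero fun k hk => ?_
        rw [cauchy hq n (-(q⁻¹ ^ k))]
        rw [Finset.prod_eq_zero hk (by
          field_simp
          rw [← mul_pow, mul_one_div_cancel hq0, one_pow]; ring)]
        ring
end

section
/- Let n, d be positive integers, F a finite field with q elements, and S ⊆ F^n a subspace. Then for every integer t with t ≤ min{dim(S), d}, the probability over a uniformly random matrix X ∈ F^{d×n} that dim(X(S)) ≤ t is at most 4·q^{−(dim(S)−t)(d−t)}. -/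
set_option linter.unusedSectionVars false
set_option linter.unusedTactic false
set_option linter.unusedVariables false

section Aux
variable {F : Type*} [Field F] [Fintype F]


open Finset in
lemma prod_half_aux : ∀ s : ℕ,
    (2/7 : ℝ) + (16/49) * (1/2)^s ≤ ∏ j ∈ Finset.range s, (1 - (1/2 : ℝ)^(j+1)) := by
  intro s
  induction s with
  | zero => norm_num
  | succ s ih =>
    rw [Finset.prod_range_succ]
    rcases lt_or_ge s 3 with hs | hs
    · interval_cases s <;> simp [Finset.prod_range_succ] <;> norm_num
    · have hx : ((1:ℝ)/2)^s ≤ (1/2)^3 := pow_le_pow_of_le_one (by norm_num) (by norm_num) hs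
      have hx0 : (0:ℝ) < (1/2)^s := by positivity
      have h1 : (0:ℝ) ≤ 1 - (1/2:ℝ)^(s+1) := by
        have : ((1:ℝ)/2)^(s+1) ≤ 1 := pow_le_one₀ (by norm_num) (by norm_num)
        linarith
      have := mul_le_mul_of_nonneg_right ih h1
      refine le_trans ?_ this
      rw [pow_succ]
      nlinarith [hx0, hx]

lemma prod_ge_two_sevenths {q : ℝ} (hq : 2 ≤ q) (s : ℕ) :
    (2/7 : ℝ) ≤ ∏ j ∈ Finset.range s, (1 - q⁻¹^(j+1)) := by
  have h2 : ∀ j ∈ Finset.range s, (0:ℝ) ≤ 1 - (1/2:ℝ)^(j+1) ∧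
      (1 - (1/2:ℝ)^(j+1)) ≤ 1 - q⁻¹^(j+1) := by
    intro j _
    have hq0 : (0:ℝ) < q := by linarith
    have hle : q⁻¹ ≤ (1/2:ℝ) := by
      rw [inv_le_comm₀ hq0 (by norm_num)]; linarith
    have h0 : (0:ℝ) ≤ q⁻¹ := by positivity
    have := pow_le_pow_left₀ h0 hle (j+1)
    constructor
    · have : ((1:ℝ)/2)^(j+1) ≤ 1 := pow_le_one₀ (by norm_num) (by norm_num)
      linarith
    · linarith
  have := Finset.prod_le_prod (fun j hj => (h2 j hj).1) (fun j hj => (h2 j hj).2)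
  refine le_trans ?_ this
  have h := prod_half_aux s
  have : (2/7:ℝ) ≤ ∏ j ∈ Finset.range s, (1 - (1/2:ℝ)^(j+1)) := by
    have : (0:ℝ) ≤ (16/49) * (1/2)^s := by positivity
    linarith
  linarith

lemma card_GL_lower (F : Type*) [Field F] [Fintype F] (s : ℕ) :
    (2/7 : ℝ) * (Fintype.card F : ℝ)^(s*s) ≤ (Nat.card (GL (Fin s) F) : ℝ) := by
  set q := Fintype.card F with hqdef
  have hq2 : (2:ℕ) ≤ q := Fintype.one_lt_card
  have hq2R : (2:ℝ) ≤ (q:ℝ) := by exact_mod_cast hq2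
  have hq0 : (0:ℝ) < (q:ℝ) := by linarith
  rw [Matrix.card_GL_field]
  have hcast : ((∏ i : Fin s, (q ^ s - q ^ (i:ℕ)) : ℕ) : ℝ)
      = ∏ i ∈ Finset.range s, ((q:ℝ)^s - (q:ℝ)^i) := by
    rw [Nat.cast_prod, ← Fin.prod_univ_eq_prod_range (fun i => ((q:ℝ)^s - (q:ℝ)^i)) s]
    refine Finset.prod_congr rfl fun i _ => ?_
    skip
    have : q ^ (i:ℕ) ≤ q ^ s := Nat.pow_le_pow_right (by omega) i.2.le
    push_cast [Nat.cast_sub this]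
    ring
  rw [hcast]
  have hfac : ∀ i ∈ Finset.range s, ((q:ℝ)^s - (q:ℝ)^i)
      = (q:ℝ)^s * (1 - ((q:ℝ)⁻¹)^(s-i)) := by
    intro i hi
    have hi' : i < s := Finset.mem_range.mp hi
    have : ((q:ℝ)⁻¹)^(s-i) = (q:ℝ)^i / (q:ℝ)^s := by
      rw [inv_pow, eq_div_iff (by positivity), inv_mul_eq_div, div_eq_iff (by positivity),
        ← pow_add]
      congr 1; omega
    rw [this]
    field_simp
  rw [Finset.prod_congr rfl hfac, Finset.prod_mul_distrib, Finset.prod_const,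
    ← pow_mul]
  have hrefl : ∏ i ∈ Finset.range s, (1 - ((q:ℝ)⁻¹)^(s-i))
      = ∏ j ∈ Finset.range s, (1 - ((q:ℝ)⁻¹)^(j+1)) := by
    rw [← Finset.prod_range_reflect]
    refine Finset.prod_congr rfl fun j hj => ?_
    have : s - (s - 1 - j) = j + 1 := by have := Finset.mem_range.mp hj; omega
    rw [this]
  rw [hrefl]
  have h27 := prod_ge_two_sevenths hq2R s
  have hpow : (0:ℝ) ≤ (q:ℝ)^(s*s) := by positivity
  calc (2/7:ℝ) * (q:ℝ)^(s*s) ≤ (∏ j ∈ Finset.range s, (1 - ((q:ℝ)⁻¹)^(j+1))) * (q:ℝ)^(s*s) :=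
        mul_le_mul_of_nonneg_right h27 hpow
    _ = (q:ℝ)^(s*(Finset.range s).card) * ∏ j ∈ Finset.range s, (1 - ((q:ℝ)⁻¹)^(j+1)) := by
        rw [Finset.card_range]; exact mul_comm _ _


lemma card_preimage_eq {F M N : Type*} [Field F] [AddCommGroup M] [Module F M]
    [AddCommGroup N] [Module F N] (f : M →ₗ[F] N) (hf : Function.Surjective f)
    (P : N → Prop) :
    Nat.card {x : M // P (f x)} = Nat.card {y : N // P y} * Nat.card (LinearMap.ker f) := by
  classical
  let s : N → M := Function.surjInv hf
  have hs : ∀ y, f (s y) = y := Function.surjInv_eq hf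
  have e : {x : M // P (f x)} ≃ {y : N // P y} × LinearMap.ker f :=
    { toFun := fun x => (⟨f x.1, x.2⟩, ⟨x.1 - s (f x.1), by
        simp [LinearMap.mem_ker, hs]⟩)
      invFun := fun yz => ⟨s yz.1.1 + yz.2.1, by
        have hz := yz.2.2
        rw [LinearMap.mem_ker] at hz
        simpa [hz, hs] using yz.1.2⟩
      left_inv := fun x => by simp
      right_inv := fun yz => by
        have hz := yz.2.2
        rw [LinearMap.mem_ker] at hz
        ext <;> simp [hs, hz] }
  rw [Nat.card_congr e, Nat.card_prod]

lemma exists_factorization {d k : ℕ} (A : Matrix (Fin d) (Fin k) F) {s : ℕ}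
    (h : A.rank = s) :
    ∃ (M : Matrix (Fin d) (Fin s) F) (C : Matrix (Fin s) (Fin k) F),
      Function.Injective M.mulVecLin ∧ M * C = A := by
  classical
  have hfr : Module.finrank F (LinearMap.range A.mulVecLin) = s := h
  let b : Module.Basis (Fin s) F (LinearMap.range A.mulVecLin) :=
    Module.finBasisOfFinrankEq F _ hfr
  have hcol : ∀ j, (fun i => A i j) ∈ LinearMap.range A.mulVecLin := by
    intro j
    refine ⟨Pi.single j 1, ?_⟩
    rw [Matrix.mulVecLin_apply, Matrix.mulVec_single_one]
    rfl
  refine ⟨Matrix.of fun i j => (b j : Fin d → F) i,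
    Matrix.of fun r j => b.repr ⟨fun i => A i j, hcol j⟩ r, ?_, ?_⟩
  · rw [injective_iff_map_eq_zero]
    intro c hc
    have hc' : ∀ i, (∑ r, c r • ((b r : Fin d → F))) i = 0 := by
      intro i
      have := congrFun hc i
      simpa [Matrix.mulVecLin_apply, Matrix.mulVec, dotProduct,
        Finset.sum_apply, mul_comm] using this
    have hsum : (∑ r, c r • (b r)) = (0 : LinearMap.range A.mulVecLin) := by
      apply Subtype.ext
      rw [Submodule.coe_sum]
      ext i
      simpa using hc' i
    have := linearIndependent_iff'.mp b.linearIndependent Finset.univ c (by simpa using hsum)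
    ext r
    exact this r (Finset.mem_univ r)
  · ext i j
    have hrepr := b.sum_repr ⟨fun i => A i j, hcol j⟩
    have := congrArg (fun v : LinearMap.range A.mulVecLin => (v : Fin d → F) i) hrepr
    simp only [Submodule.coe_sum, Finset.sum_apply, Submodule.coe_smul, Pi.smul_apply] at this
    simpa [Matrix.mul_apply, smul_eq_mul, mul_comm] using this

lemma card_matrix (a b : ℕ) :
    Fintype.card (Matrix (Fin a) (Fin b) F) = Fintype.card F ^ (a * b) := by
  rw [Fintype.card_congr (Matrix.of (m := Fin a) (n := Fin b) (α := F)).symm]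
  simp only [Fintype.card_fun, Fintype.card_fin, ← pow_mul, Nat.mul_comm]

lemma matrix_mulVec_ext {a b : ℕ} (M N : Matrix (Fin a) (Fin b) F)
    (h : ∀ x, M.mulVec x = N.mulVec x) : M = N := by
  ext i j
  have := congrFun (h (Pi.single j 1)) i
  rwa [Matrix.mulVec_single_one, Matrix.mulVec_single_one] at this

lemma card_rank_eq_mul_le {d k : ℕ} (s : ℕ) :
    Nat.card {A : Matrix (Fin d) (Fin k) F // A.rank = s} * Nat.card (GL (Fin s) F)
      ≤ Fintype.card F ^ (d * s) * Fintype.card F ^ (s * k) := by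
  classical
  choose M C hMinj hMC using
    fun (A : {A : Matrix (Fin d) (Fin k) F // A.rank = s}) => exists_factorization A.1 A.2
  set Φ : {A : Matrix (Fin d) (Fin k) F // A.rank = s} × GL (Fin s) F →
      Matrix (Fin d) (Fin s) F × Matrix (Fin s) (Fin k) F :=
    fun p => (M p.1 * (p.2 : Matrix (Fin s) (Fin s) F),
      ((p.2⁻¹ : GL (Fin s) F) : Matrix (Fin s) (Fin s) F) * C p.1) with hΦ
  have hΦprod : ∀ p, (Φ p).1 * (Φ p).2 = p.1.1 := by
    intro p
    simp only [hΦ]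
    rw [Matrix.mul_assoc, ← Matrix.mul_assoc (p.2 : Matrix (Fin s) (Fin s) F)]
    have : (p.2 : Matrix (Fin s) (Fin s) F) * ((p.2⁻¹ : GL (Fin s) F) : _) = 1 := by
      exact_mod_cast p.2.mul_inv
    rw [this, Matrix.one_mul, hMC]
  have hinj : Function.Injective Φ := by
    intro p p' hpp
    have hA : p.1 = p'.1 := by
      apply Subtype.ext
      rw [← hΦprod p, ← hΦprod p', hpp]
    obtain ⟨Ap, g⟩ := p
    obtain ⟨Ap', g'⟩ := p'
    simp only at hA
    subst hA
    simp only [Prod.mk.injEq, hΦ] at hpp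
    have hMg : M Ap * (g : Matrix (Fin s) (Fin s) F) = M Ap * (g' : Matrix (Fin s) (Fin s) F) := hpp.1
    have : (g : Matrix (Fin s) (Fin s) F) = (g' : Matrix (Fin s) (Fin s) F) := by
      apply matrix_mulVec_ext
      intro x
      apply hMinj Ap
      have := congrArg (fun (Q : Matrix (Fin d) (Fin s) F) => Q.mulVec x) hMg
      simpa [Matrix.mulVecLin_apply, ← Matrix.mulVec_mulVec] using this
    simp [Units.ext_iff, this]
  have := Nat.card_le_card_of_injective Φ hinj
  rw [Nat.card_prod] at this
  refine le_trans this ?_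
  rw [Nat.card_prod, Nat.card_eq_fintype_card, Nat.card_eq_fintype_card]
  rw [card_matrix, card_matrix]

lemma card_rank_le_sum (d k t : ℕ) :
    Nat.card {A : Matrix (Fin d) (Fin k) F // A.rank ≤ t}
      ≤ ∑ s ∈ Finset.range (t+1), Nat.card {A : Matrix (Fin d) (Fin k) F // A.rank = s} := by
  classical
  simp only [Nat.card_eq_fintype_card, Fintype.card_subtype]
  have : (Finset.univ.filter fun A : Matrix (Fin d) (Fin k) F => A.rank ≤ t)
      = (Finset.range (t+1)).biUnion
          (fun s => Finset.univ.filter fun A : Matrix (Fin d) (Fin k) F => A.rank = s) := by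
    ext A
    simp [Nat.lt_succ_iff]
  rw [this]
  exact le_trans (Finset.card_biUnion_le) le_rfl

lemma geom_eighth_le (n : ℕ) : ∑ m ∈ Finset.range n, ((1/8 : ℝ))^m ≤ 8/7 := by
  rw [geom_sum_eq (by norm_num : (1/8:ℝ) ≠ 1) n]
  have h0 : (0:ℝ) ≤ (1/8:ℝ)^n := by positivity
  rw [div_le_iff_of_neg (by norm_num : (1/8:ℝ) - 1 < 0)]
  linarith

lemma card_rank_le_real {d k t : ℕ} (htd : t+1 ≤ d) (htk : t+1 ≤ k) :
    (Nat.card {A : Matrix (Fin d) (Fin k) F // A.rank ≤ t} : ℝ)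
      ≤ 4 * (Fintype.card F : ℝ) ^ (((t : ℤ) * (d + k)) - t*t) := by
  set q : ℝ := (Fintype.card F : ℝ) with hqdef
  have hq2 : (2:ℝ) ≤ q := by
    rw [hqdef]; exact_mod_cast (Fintype.one_lt_card : 1 < Fintype.card F)
  have hq1 : (1:ℝ) ≤ q := by linarith
  have hq0 : (0:ℝ) < q := by linarith
  set E : ℕ → ℤ := fun s => ((s : ℤ) * (d + k)) - s*s with hE
  have hrank : ∀ s : ℕ,
      (Nat.card {A : Matrix (Fin d) (Fin k) F // A.rank = s} : ℝ)
        ≤ (7/2) * q ^ (E s) := by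
    intro s
    have h1R : (Nat.card {A : Matrix (Fin d) (Fin k) F // A.rank = s} : ℝ)
        * (Nat.card (GL (Fin s) F) : ℝ) ≤ q ^ (d*s) * q ^ (s*k) := by
      rw [hqdef]
      exact_mod_cast card_rank_eq_mul_le (F := F) (d := d) (k := k) s
    have h2 := card_GL_lower F s
    have hcard0 : (0:ℝ) ≤ (Nat.card {A : Matrix (Fin d) (Fin k) F // A.rank = s} : ℝ) := by
      positivity
    have hq27 : (0:ℝ) < (2/7) * q^(s*s) := by positivity
    have key : (Nat.card {A : Matrix (Fin d) (Fin k) F // A.rank = s} : ℝ)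
        * ((2/7) * q^(s*s)) ≤ q ^ (d*s) * q ^ (s*k) :=
      (mul_le_mul_of_nonneg_left h2 hcard0).trans h1R
    have hsplit : q^(d*s) * q^(s*k) = ((7/2) * q ^ (E s)) * ((2/7) * q^(s*s)) := by
      have hexp : ((d*s : ℕ):ℤ) + ((s*k : ℕ):ℤ) = E s + ((s*s : ℕ):ℤ) := by
        simp only [hE]; push_cast; ring
      rw [← zpow_natCast q (d*s), ← zpow_natCast q (s*k), ← zpow_add₀ hq0.ne', hexp,
        zpow_add₀ hq0.ne', zpow_natCast]
      ring
    rw [hsplit] at key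
    exact le_of_mul_le_mul_right key hq27
  have hterm : ∀ s ∈ Finset.range (t+1),
      (7/2 : ℝ) * q ^ (E s) ≤ (7/2) * q ^ (E t) * (1/8)^(t-s) := by
    intro s hs
    have hs' : s ≤ t := Nat.lt_succ_iff.mp (Finset.mem_range.mp hs)
    have h8 : ((8:ℝ))^(t-s) ≤ q^(3*(t-s)) := by
      calc ((8:ℝ))^(t-s) = (2^3 : ℝ)^(t-s) := by norm_num
        _ = ((2:ℝ))^(3*(t-s)) := by rw [← pow_mul]
        _ ≤ q^(3*(t-s)) := pow_le_pow_left₀ (by norm_num) hq2 _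
    have hexp : E s + (3*(t-s) : ℕ) ≤ E t := by
      simp only [hE]
      have h1 : (s:ℤ) ≤ t := by exact_mod_cast hs'
      have h2 : ((3*(t-s):ℕ) : ℤ) = 3*((t:ℤ) - s) := by
        push_cast [Nat.cast_sub hs']; ring
      rw [h2]
      have hd' : (t:ℤ) + 1 ≤ d := by exact_mod_cast htd
      have hk' : (t:ℤ) + 1 ≤ k := by exact_mod_cast htk
      nlinarith [sq_nonneg ((t:ℤ) - s), mul_nonneg (sub_nonneg.mpr h1) (sub_nonneg.mpr h1)]
    have hz : q ^ (E s) * q^(3*(t-s) : ℕ) ≤ q ^ (E t) := by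
      rw [← zpow_natCast q (3*(t-s)), ← zpow_add₀ hq0.ne']
      exact zpow_le_zpow_right₀ hq1 hexp
    have h8pos : (0:ℝ) < (8:ℝ)^(t-s) := by positivity
    have hqE : (0:ℝ) < q ^ (E s) := zpow_pos hq0 _
    have : q ^ (E s) * (8:ℝ)^(t-s) ≤ q ^ (E t) := by
      calc q ^ (E s) * (8:ℝ)^(t-s) ≤ q ^ (E s) * q^(3*(t-s) : ℕ) :=
            mul_le_mul_of_nonneg_left h8 hqE.le
        _ ≤ q ^ (E t) := hz
    have h18 : ((1:ℝ)/8)^(t-s) = ((8:ℝ)^(t-s))⁻¹ := by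
      rw [div_pow, one_pow, one_div]
    rw [mul_assoc, h18, ← div_eq_mul_inv]
    gcongr
    rw [le_div_iff₀ h8pos]
    exact this
  calc (Nat.card {A : Matrix (Fin d) (Fin k) F // A.rank ≤ t} : ℝ)
      ≤ ∑ s ∈ Finset.range (t+1),
          (Nat.card {A : Matrix (Fin d) (Fin k) F // A.rank = s} : ℝ) := by
        exact_mod_cast card_rank_le_sum (F := F) d k t
    _ ≤ ∑ s ∈ Finset.range (t+1), (7/2 : ℝ) * q ^ (E s) :=
        Finset.sum_le_sum (fun s _ => hrank s)
    _ ≤ ∑ s ∈ Finset.range (t+1), (7/2 : ℝ) * q ^ (E t) * (1/8)^(t-s) :=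
        Finset.sum_le_sum hterm
    _ = (7/2 : ℝ) * q ^ (E t) * ∑ s ∈ Finset.range (t+1), (1/8:ℝ)^(t-s) := by
        rw [Finset.mul_sum]
    _ = (7/2 : ℝ) * q ^ (E t) * ∑ m ∈ Finset.range (t+1), (1/8:ℝ)^m := by
        congr 1
        rw [← Finset.sum_range_reflect]
        refine Finset.sum_congr rfl fun j hj => ?_
        congr 1
        have := Finset.mem_range.mp hj
        omega
    _ ≤ (7/2 : ℝ) * q ^ (E t) * (8/7) := by
        refine mul_le_mul_of_nonneg_left (geom_eighth_le (t+1)) ?_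
        positivity
    _ = 4 * q ^ (E t) := by ring

lemma exists_B {n : ℕ} (S : Submodule F (Fin n → F)) :
    ∃ B : Matrix (Fin n) (Fin (Module.finrank F ↥S)) F,
      Function.Injective B.mulVecLin ∧ LinearMap.range B.mulVecLin = S := by
  classical
  set k := Module.finrank F ↥S
  let b : Module.Basis (Fin k) F ↥S := Module.finBasis F ↥S
  have heq : (Matrix.of fun i j => ((b j : ↥S) : Fin n → F) i).mulVecLin
      = S.subtype.comp (b.equivFun.symm : (Fin k → F) ≃ₗ[F] ↥S).toLinearMap := by
    ext c i
    simp only [Matrix.mulVecLin_apply, Matrix.mulVec, dotProduct, Matrix.of_apply,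
      LinearMap.comp_apply, Submodule.coe_subtype, LinearEquiv.coe_coe,
      Module.Basis.equivFun_symm_apply]
    rw [AddSubmonoid.coe_finset_sum]
    rw [Finset.sum_apply]
    simp [mul_comm]
  refine ⟨Matrix.of fun i j => ((b j : ↥S) : Fin n → F) i, ?_, ?_⟩
  · rw [heq, LinearMap.coe_comp]
    exact Function.Injective.comp S.injective_subtype (LinearEquiv.injective _)
  · rw [heq, LinearMap.range_comp, LinearEquiv.range, Submodule.map_top,
      Submodule.range_subtype]

end Aux

theorem stmt10 (F : Type*) [Field F] [Fintype F] (n d : ℕ) (hn : 0 < n) (hd : 0 < d)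
    (S : Submodule F (Fin n → F)) (t : ℤ)
    (ht : t ≤ min (Module.finrank F ↥S : ℤ) (d : ℤ)) :
    (Nat.card {X : Matrix (Fin d) (Fin n) F //
          (Module.finrank F ↥(S.map (Matrix.mulVecLin X)) : ℤ) ≤ t} : ℝ) /
        (Fintype.card (Matrix (Fin d) (Fin n) F) : ℝ) ≤
      4 * (Fintype.card F : ℝ) ^
        (-(((Module.finrank F ↥S : ℤ) - t) * ((d : ℤ) - t))) := by
  classical
  set k := Module.finrank F ↥S with hk
  have hq2 : 1 < Fintype.card F := Fintype.one_lt_card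
  have hqR : (0:ℝ) < (Fintype.card F : ℝ) := by positivity
  have hdenomF : (0:ℝ) < (Fintype.card (Matrix (Fin d) (Fin n) F) : ℝ) := by
    exact_mod_cast Fintype.card_pos
  rcases lt_or_ge t 0 with ht0 | ht0
  · have hempty : IsEmpty {X : Matrix (Fin d) (Fin n) F //
        (Module.finrank F ↥(S.map (Matrix.mulVecLin X)) : ℤ) ≤ t} := by
      refine ⟨fun X => ?_⟩
      have h0 : (0:ℤ) ≤ (Module.finrank F ↥(S.map (Matrix.mulVecLin X.1)) : ℤ) := by
        positivity
      have := X.2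
      omega
    rw [Nat.card_of_isEmpty, Nat.cast_zero, zero_div]
    positivity
  · lift t to ℕ using ht0 with t'
    have htk : t' ≤ k := by exact_mod_cast (le_min_iff.mp ht).1
    have htd : t' ≤ d := by exact_mod_cast (le_min_iff.mp ht).2
    by_cases hlt : t' < k ∧ t' < d
    · obtain ⟨B, hBinj, hBrange⟩ := exists_B S
      let Ψ : Matrix (Fin d) (Fin n) F →ₗ[F] Matrix (Fin d) (Fin k) F :=
        { toFun := fun X => X * B
          map_add' := fun X Y => Matrix.add_mul X Y B
          map_smul' := fun c X => Matrix.smul_mul c X B }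
      have hΨrank : ∀ X : Matrix (Fin d) (Fin n) F,
          Module.finrank F ↥(S.map X.mulVecLin) = (Ψ X).rank := by
        intro X
        show _ = (X * B).rank
        rw [Matrix.rank, Matrix.mulVecLin_mul, LinearMap.range_comp, hBrange]
      have hΨsurj : Function.Surjective Ψ := by
        have hker : LinearMap.ker B.mulVecLin = ⊥ := LinearMap.ker_eq_bot.mpr hBinj
        obtain ⟨g, hg⟩ := B.mulVecLin.exists_leftInverse_of_injective hker
        have hgB : Matrix.mulVecLin (LinearMap.toMatrix' g) = g :=
          LinearMap.toMatrix'.symm_apply_apply g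
        have hLB : (LinearMap.toMatrix' g) * B = 1 := by
          apply matrix_mulVec_ext
          intro x
          have h1 : ((LinearMap.toMatrix' g) * B).mulVecLin x
              = (LinearMap.toMatrix' g).mulVecLin (B.mulVecLin x) := by
            rw [Matrix.mulVecLin_mul]; rfl
          have h2 : ((LinearMap.toMatrix' g) * B).mulVecLin x = x := by
            rw [h1, hgB]
            exact LinearMap.congr_fun hg x
          rw [Matrix.one_mulVec]
          simpa [Matrix.mulVecLin_apply] using h2
        intro A
        refine ⟨A * (LinearMap.toMatrix' g), ?_⟩
        show (A * (LinearMap.toMatrix' g)) * B = A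
        rw [Matrix.mul_assoc, hLB, Matrix.mul_one]
      have hnum : Nat.card {X : Matrix (Fin d) (Fin n) F //
            (Module.finrank F ↥(S.map (Matrix.mulVecLin X)) : ℤ) ≤ (t' : ℤ)}
          = Nat.card {X : Matrix (Fin d) (Fin n) F // (Ψ X).rank ≤ t'} := by
        apply Nat.card_congr
        apply Equiv.subtypeEquivRight
        intro X
        rw [hΨrank X]
        exact_mod_cast Iff.rfl
      have hcount := card_preimage_eq Ψ hΨsurj (fun A => A.rank ≤ t')
      have htotal := card_preimage_eq Ψ hΨsurj (fun _ => True)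
      have htot1 : Nat.card {X : Matrix (Fin d) (Fin n) F // True}
          = Nat.card (Matrix (Fin d) (Fin n) F) :=
        Nat.card_congr (Equiv.subtypeUnivEquiv fun _ => trivial)
      have htot2 : Nat.card {A : Matrix (Fin d) (Fin k) F // True}
          = Nat.card (Matrix (Fin d) (Fin k) F) :=
        Nat.card_congr (Equiv.subtypeUnivEquiv fun _ => trivial)
      have hKpos : 0 < Nat.card (LinearMap.ker Ψ) := Nat.card_pos
      set K := Nat.card (LinearMap.ker Ψ) with hKdef
      set a := Nat.card {A : Matrix (Fin d) (Fin k) F // A.rank ≤ t'} with hadef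
      have hden : Fintype.card (Matrix (Fin d) (Fin n) F)
          = Fintype.card F ^ (d * k) * K := by
        rw [← Nat.card_eq_fintype_card, ← htot1, htotal, htot2,
          Nat.card_eq_fintype_card, card_matrix]
      have hLHS : (Nat.card {X : Matrix (Fin d) (Fin n) F //
            (Module.finrank F ↥(S.map (Matrix.mulVecLin X)) : ℤ) ≤ (t' : ℤ)} : ℝ) /
          (Fintype.card (Matrix (Fin d) (Fin n) F) : ℝ)
          = (a : ℝ) / (Fintype.card F ^ (d * k) : ℝ) := by
        rw [hnum, hcount, hden]
        push_cast
        rw [mul_div_mul_right]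
        exact_mod_cast hKpos.ne'
      rw [hLHS]
      have hbound := card_rank_le_real (F := F) (d := d) (k := k) (t := t') hlt.2 hlt.1
      rw [← hadef] at hbound
      have hpowpos : (0:ℝ) < ((Fintype.card F : ℝ) ^ (d * k) : ℝ) := by positivity
      rw [div_le_iff₀ hpowpos]
      have hexp : (-(((k : ℤ) - t') * ((d : ℤ) - t'))) + ((d * k : ℕ) : ℤ)
          = ((t' : ℤ) * (d + k)) - t' * t' := by push_cast; ring
      calc (a : ℝ) ≤ 4 * (Fintype.card F : ℝ) ^ (((t' : ℤ) * (d + k)) - t' * t') := hbound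
        _ = 4 * (Fintype.card F : ℝ) ^ (-(((k : ℤ) - t') * ((d : ℤ) - t')))
              * (Fintype.card F : ℝ) ^ (d * k) := by
            rw [mul_assoc, ← zpow_natCast (Fintype.card F : ℝ) (d * k),
              ← zpow_add₀ hqR.ne', hexp]
    · have hzero : (-(((k : ℤ) - t') * ((d : ℤ) - t'))) = 0 := by
        have : t' = k ∨ t' = d := by omega
        rcases this with h | h <;> subst h <;> ring
      rw [hzero, zpow_zero, mul_one]
      have hle1 : (Nat.card {X : Matrix (Fin d) (Fin n) F //
            (Module.finrank F ↥(S.map (Matrix.mulVecLin X)) : ℤ) ≤ (t' : ℤ)} : ℝ)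
          ≤ (Fintype.card (Matrix (Fin d) (Fin n) F) : ℝ) := by
        have := Nat.card_le_card_of_injective
          (Subtype.val : {X : Matrix (Fin d) (Fin n) F //
            (Module.finrank F ↥(S.map (Matrix.mulVecLin X)) : ℤ) ≤ (t' : ℤ)} → _)
          Subtype.val_injective
        rw [Nat.card_eq_fintype_card (α := Matrix (Fin d) (Fin n) F)] at this
        exact_mod_cast this
      rw [div_le_iff₀ hdenomF]
      nlinarith [hdenomF, hle1]
end

section
/- Let n, m, d be positive integers, F a finite field with q elements, and M ∈ F^{n×m} a fixed matrix. Then for every integer t ≤ min{rk(M), d}, the probability over a uniformly random X ∈ F^{d×n} that rk(XM) ≤ t is at most 4·q^{−(rk(M)−t)(d−t)}. -/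
open Module Submodule Matrix

section Aux

variable {F : Type*} [Field F] [Fintype F]

/-- cardinality of a finite vector space -/
private lemma stmt11_card (V : Type*) [AddCommGroup V] [Module F V] [Finite V] :
    Nat.card V = Fintype.card F ^ finrank F V := by
  have : Fintype V := Fintype.ofFinite V
  rw [Nat.card_eq_fintype_card]
  exact card_eq_pow_finrank

/-- extend a subspace to a subspace of any prescribed dimension -/
private lemma stmt11_ext {E : Type*} [AddCommGroup E] [Module F E] [FiniteDimensional F E] :
    ∀ (j : ℕ) (U : Submodule F E) (k : ℕ), finrank F U ≤ k → k ≤ finrank F E →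
      j = k - finrank F U → ∃ W : Submodule F E, U ≤ W ∧ finrank F W = k := by
  intro j
  induction j with
  | zero => exact fun U k h1 h2 h3 => ⟨U, le_rfl, by omega⟩
  | succ j ih =>
    intro U k h1 h2 h3
    have hlt : finrank F U < finrank F E := by omega
    have hUtop : U ≠ ⊤ := fun h => by rw [h, finrank_top] at hlt; omega
    obtain ⟨v, hv⟩ : ∃ v, v ∉ U := by
      by_contra h; push_neg at h; exact hUtop (Submodule.eq_top_iff'.2 h)
    have hv0 : v ≠ 0 := fun h => hv (h ▸ U.zero_mem)
    have hinf : U ⊓ (F ∙ v) = ⊥ := by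
      rw [eq_bot_iff]
      rintro x ⟨hxU, hxv⟩
      obtain ⟨c, rfl⟩ := Submodule.mem_span_singleton.1 hxv
      rcases eq_or_ne c 0 with rfl | hc
      · simp
      · exfalso
        apply hv
        have := U.smul_mem c⁻¹ hxU
        rwa [smul_smul, inv_mul_cancel₀ hc, one_smul] at this
    have hsum := Submodule.finrank_sup_add_finrank_inf_eq U (F ∙ v)
    rw [hinf, finrank_bot, finrank_span_singleton hv0] at hsum
    obtain ⟨W, hW1, hW2⟩ := ih (U ⊔ (F ∙ v)) k (by omega) h2 (by omega)
    exact ⟨W, le_trans le_sup_left hW1, hW2⟩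

/-- counting matrices mapping a fixed subspace into a fixed subspace -/
private lemma stmt11_count {n d : ℕ} (V : Submodule F (Fin n → F))
    (W : Submodule F (Fin d → F)) :
    Nat.card {X : Matrix (Fin d) (Fin n) F // Submodule.map X.mulVecLin V ≤ W} *
      Fintype.card F ^ (finrank F V * finrank F ((Fin d → F) ⧸ W)) =
    Fintype.card F ^ (d * n) := by
  classical
  let Φ : Matrix (Fin d) (Fin n) F →ₗ[F] (V →ₗ[F] ((Fin d → F) ⧸ W)) :=
    { toFun := fun X => W.mkQ ∘ₗ X.mulVecLin ∘ₗ V.subtype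
      map_add' := by intro X Y; ext v; simp [Matrix.add_mulVec]
      map_smul' := by intro c X; ext v; simp [Matrix.smul_mulVec] }
  have hker : ∀ X : Matrix (Fin d) (Fin n) F,
      X ∈ LinearMap.ker Φ ↔ Submodule.map X.mulVecLin V ≤ W := by
    intro X
    simp only [LinearMap.mem_ker]
    constructor
    · intro h y hy
      obtain ⟨v, hv, rfl⟩ := hy
      have := LinearMap.congr_fun h ⟨v, hv⟩
      simpa [Φ, Submodule.Quotient.mk_eq_zero] using this
    · intro h
      ext v
      have : X.mulVecLin v.1 ∈ W := h (Submodule.mem_map_of_mem v.2)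
      simpa [Φ, Submodule.Quotient.mk_eq_zero] using this
  have hsurj : Function.Surjective Φ := by
    intro g
    obtain ⟨π, hπ⟩ := V.subtype.exists_leftInverse_of_injective V.ker_subtype
    obtain ⟨h, hh⟩ := Module.projective_lifting_property W.mkQ (g ∘ₗ π) W.mkQ_surjective
    refine ⟨LinearMap.toMatrix' h, ?_⟩
    have hmul : (LinearMap.toMatrix' h).mulVecLin = h := by
      apply LinearMap.ext
      intro v
      rw [Matrix.mulVecLin_apply, ← Matrix.toLin'_apply, Matrix.toLin'_toMatrix']
    ext v
    have h1 : W.mkQ (h v.1) = g (π v.1) := LinearMap.congr_fun hh v.1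
    have h2 : π v.1 = v := LinearMap.congr_fun hπ v
    simp [Φ, hmul, h1, h2]
  have e2 : (Matrix (Fin d) (Fin n) F ⧸ LinearMap.ker Φ) ≃ₗ[F]
      (V →ₗ[F] ((Fin d → F) ⧸ W)) := LinearMap.quotKerEquivOfSurjective Φ hsurj
  haveI : Finite (V →ₗ[F] ((Fin d → F) ⧸ W)) :=
    Finite.of_injective _ LinearMap.coe_injective
  have h1 := Submodule.card_eq_card_quotient_mul_card (LinearMap.ker Φ)
  have h2 : Nat.card (Matrix (Fin d) (Fin n) F ⧸ LinearMap.ker Φ) =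
      Fintype.card F ^ (finrank F V * finrank F ((Fin d → F) ⧸ W)) := by
    rw [Nat.card_congr e2.toEquiv, stmt11_card (F := F), Module.finrank_linearMap]
  have h3 : Nat.card (LinearMap.ker Φ) =
      Nat.card {X : Matrix (Fin d) (Fin n) F // Submodule.map X.mulVecLin V ≤ W} :=
    Nat.card_congr (Equiv.subtypeEquivRight hker)
  have h4 : Nat.card (Matrix (Fin d) (Fin n) F) = Fintype.card F ^ (d * n) := by
    rw [stmt11_card (F := F), Module.finrank_matrix]
    simp [mul_comm]
  rw [h4, h2, h3] at h1
  rw [← h1, mul_comm]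

/-- counting subspaces of prescribed dimension -/
private lemma stmt11_grass {d k : ℕ} (hkd : k ≤ d) :
    Nat.card {W : Submodule F (Fin d → F) // finrank F W = k} *
      ∏ i : Fin k, (Fintype.card F ^ k - Fintype.card F ^ (i : ℕ)) ≤
      Fintype.card F ^ (d * k) := by
  classical
  haveI : Finite (Submodule F (Fin d → F)) :=
    Finite.of_injective _ SetLike.coe_injective
  haveI : Fintype {W : Submodule F (Fin d → F) // finrank F W = k} := Fintype.ofFinite _
  have hfd : finrank F (Fin d → F) = d := by
    simp [Module.finrank_fintype_fun_eq_card]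
  -- fibers
  have hfib : ∀ W : {W : Submodule F (Fin d → F) // finrank F W = k},
      Nat.card {s : Fin k → W.1 // LinearIndependent F s} =
        ∏ i : Fin k, (Fintype.card F ^ k - Fintype.card F ^ (i : ℕ)) := by
    intro W
    have := card_linearIndependent (K := F) (V := W.1) (k := k) (by rw [W.2])
    rwa [W.2] at this
  -- injection of the sigma type into linearly independent families in `Fin d → F`
  let J : (Σ W : {W : Submodule F (Fin d → F) // finrank F W = k},
      {s : Fin k → W.1 // LinearIndependent F s}) →
      {s : Fin k → (Fin d → F) // LinearIndependent F s} := fun p =>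
    ⟨fun i => (p.2.1 i : Fin d → F), p.2.2.map' p.1.1.subtype p.1.1.ker_subtype⟩
  have hspan : ∀ p : (Σ W : {W : Submodule F (Fin d → F) // finrank F W = k},
      {s : Fin k → W.1 // LinearIndependent F s}),
      p.1.1 = Submodule.span F (Set.range (fun i => (p.2.1 i : Fin d → F))) := by
    rintro ⟨⟨W, hW⟩, s, hs⟩
    have hLI : LinearIndependent F (fun i => ((s i : W) : Fin d → F)) :=
      hs.map' W.subtype W.ker_subtype
    have hle : Submodule.span F (Set.range (fun i => ((s i : W) : Fin d → F))) ≤ W := by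
      rw [Submodule.span_le]
      rintro y ⟨i, rfl⟩
      exact (s i).2
    have hfr : finrank F (Submodule.span F (Set.range (fun i => ((s i : W) : Fin d → F)))) =
        k := by
      rw [finrank_span_eq_card hLI, Fintype.card_fin]
    exact (Submodule.eq_of_le_of_finrank_le hle (by rw [hW, hfr])).symm
  have hJ : Function.Injective J := by
    rintro ⟨⟨W, hW⟩, s, hs⟩ ⟨⟨W', hW'⟩, s', hs'⟩ h
    have hcoe : (fun i => ((s i : W) : Fin d → F)) = fun i => ((s' i : W') : Fin d → F) :=
      Subtype.ext_iff.1 h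
    have hWW : W = W' := by
      have h1 := hspan ⟨⟨W, hW⟩, s, hs⟩
      have h2 := hspan ⟨⟨W', hW'⟩, s', hs'⟩
      simp only at h1 h2
      rw [h1, h2, hcoe]
    subst hWW
    have hss : s = s' := by
      funext i
      exact Subtype.ext (congrFun hcoe i)
    subst hss
    rfl
  have hcardJ : Nat.card (Σ W : {W : Submodule F (Fin d → F) // finrank F W = k},
      {s : Fin k → W.1 // LinearIndependent F s}) ≤
      Nat.card {s : Fin k → (Fin d → F) // LinearIndependent F s} :=
    Nat.card_le_card_of_injective J hJ
  have hsig : Nat.card (Σ W : {W : Submodule F (Fin d → F) // finrank F W = k},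
      {s : Fin k → W.1 // LinearIndependent F s}) =
      Nat.card {W : Submodule F (Fin d → F) // finrank F W = k} *
        ∏ i : Fin k, (Fintype.card F ^ k - Fintype.card F ^ (i : ℕ)) := by
    have : ∀ W : {W : Submodule F (Fin d → F) // finrank F W = k},
        Fintype {s : Fin k → W.1 // LinearIndependent F s} := fun _ => Fintype.ofFinite _
    rw [Nat.card_eq_fintype_card, Fintype.card_sigma]
    simp only [← Nat.card_eq_fintype_card, hfib]
    rw [Finset.sum_const, Finset.card_univ, ← Nat.card_eq_fintype_card, smul_eq_mul]
  have htot : Nat.card {s : Fin k → (Fin d → F) // LinearIndependent F s} =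
      ∏ i : Fin k, (Fintype.card F ^ d - Fintype.card F ^ (i : ℕ)) := by
    have := card_linearIndependent (K := F) (V := Fin d → F) (k := k) (by rw [hfd]; exact hkd)
    rwa [hfd] at this
  calc Nat.card {W : Submodule F (Fin d → F) // finrank F W = k} *
      ∏ i : Fin k, (Fintype.card F ^ k - Fintype.card F ^ (i : ℕ))
      = _ := hsig.symm
    _ ≤ Nat.card {s : Fin k → (Fin d → F) // LinearIndependent F s} := hcardJ
    _ = ∏ i : Fin k, (Fintype.card F ^ d - Fintype.card F ^ (i : ℕ)) := htot
    _ ≤ ∏ _i : Fin k, Fintype.card F ^ d :=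
        Finset.prod_le_prod' fun i _ => Nat.sub_le _ _
    _ = Fintype.card F ^ (d * k) := by
        rw [Finset.prod_const, Finset.card_univ, Fintype.card_fin, ← pow_mul]

end Aux

/-- Weierstrass-type product lower bound -/
private lemma stmt11_weier {x : ℝ} (hx0 : 0 < x) (hx : x ≤ 1/2) :
    ∀ k : ℕ, 1 ≤ k → 1/4 + x^k/2 ≤ ∏ j ∈ Finset.range k, (1 - x^(j+1)) := by
  intro k hk
  induction k with
  | zero => omega
  | succ k ih =>
    rcases Nat.lt_or_ge 1 (k+1) with h2 | h1
    · have hk1 : 1 ≤ k := by omega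
      have H := ih hk1
      rw [Finset.prod_range_succ]
      have hx1 : x ≤ 1 := by linarith
      have hxk : x ^ k ≤ x := by
        calc x ^ k ≤ x ^ 1 := pow_le_pow_of_le_one (le_of_lt hx0) hx1 hk1
          _ = x := pow_one x
      have hxkpos : 0 < x ^ k := pow_pos hx0 k
      have hpos : (0:ℝ) < 1 - x^(k+1) := by
        rw [pow_succ]
        nlinarith
    -- (1/4 + x^(k+1)/2) ≤ (1/4 + x^k/2) * (1 - x^(k+1)) ≤ prod * (1 - x^(k+1))
      have step1 : (1/4 + x^(k+1)/2 : ℝ) ≤ (1/4 + x^k/2) * (1 - x^(k+1)) := by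
        rw [pow_succ]
        nlinarith [mul_pos hxkpos hx0, mul_nonneg (le_of_lt hxkpos) (sub_nonneg.2 hxk),
          mul_nonneg (mul_nonneg (le_of_lt hxkpos) (le_of_lt hx0)) (by linarith : (0:ℝ) ≤ 1/2 - x),
          mul_nonneg (mul_nonneg (le_of_lt hxkpos) (le_of_lt hxkpos)) (le_of_lt hx0)]
      calc (1/4 + x^(k+1)/2 : ℝ) ≤ (1/4 + x^k/2) * (1 - x^(k+1)) := step1
        _ ≤ (∏ j ∈ Finset.range k, (1 - x^(j+1))) * (1 - x^(k+1)) :=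
            mul_le_mul_of_nonneg_right H (le_of_lt hpos)
    · -- k + 1 = 1
      have hk0 : k = 0 := by omega
      subst hk0
      have hgoal : (1/4 + x^1/2 : ℝ) ≤ 1 - x^1 := by nlinarith
      simpa using hgoal

/-- real lower bound for the product of `q^k - q^i` -/
private lemma stmt11_prod {q : ℕ} (hq : 2 ≤ q) (k : ℕ) :
    (q:ℝ) ^ (k*k) ≤ 4 * ((∏ i : Fin k, (q ^ k - q ^ (i : ℕ)) : ℕ) : ℝ) := by
  have hq0 : (0:ℝ) < (q:ℝ) := by positivity
  have hq1 : (1:ℝ) < (q:ℝ) := by exact_mod_cast hq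
  have hcast : ((∏ i : Fin k, (q ^ k - q ^ (i : ℕ)) : ℕ) : ℝ) =
      ∏ i : Fin k, ((q:ℝ) ^ k - (q:ℝ) ^ (i : ℕ)) := by
    rw [Nat.cast_prod]
    refine Finset.prod_congr rfl fun i _ => ?_
    rw [Nat.cast_sub (Nat.pow_le_pow_right (by omega) (le_of_lt i.isLt))]
    push_cast
    ring
  rw [hcast]
  set x : ℝ := (q:ℝ)⁻¹ with hxdef
  have hx0 : 0 < x := by positivity
  have hx : x ≤ 1/2 := by
    have h2 : (2:ℝ) ≤ (q:ℝ) := by exact_mod_cast hq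
    rw [hxdef, show (1/2:ℝ) = (2:ℝ)⁻¹ by norm_num]
    exact inv_anti₀ (by norm_num) h2
  have hfac : ∀ j ∈ Finset.range k, ((q:ℝ) ^ k - (q:ℝ) ^ (k - 1 - j)) =
      (q:ℝ)^k * (1 - x^(j+1)) := by
    intro j hj
    have hjk : j < k := Finset.mem_range.1 hj
    have hqkj : (q:ℝ) ^ (k - 1 - j) = (q:ℝ)^k * x^(j+1) := by
      rw [hxdef, inv_pow]
      rw [eq_comm, mul_inv_eq_iff_eq_mul₀ (by positivity), ← pow_add]
      congr 1
      omega
    rw [hqkj]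
    ring
  have hprod : ∏ i : Fin k, ((q:ℝ) ^ k - (q:ℝ) ^ (i : ℕ)) =
      (q:ℝ)^(k*k) * ∏ j ∈ Finset.range k, (1 - x^(j+1)) := by
    rw [Fin.prod_univ_eq_prod_range (fun i => ((q:ℝ) ^ k - (q:ℝ) ^ i)) k]
    rw [← Finset.prod_range_reflect (fun i => ((q:ℝ) ^ k - (q:ℝ) ^ i)) k]
    rw [Finset.prod_congr rfl hfac, Finset.prod_mul_distrib, Finset.prod_const,
      Finset.card_range, ← pow_mul]
  rw [hprod]
  have hW : (1/4 : ℝ) ≤ ∏ j ∈ Finset.range k, (1 - x^(j+1)) := by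
    rcases Nat.eq_zero_or_pos k with rfl | hk
    · simp; norm_num
    · have := stmt11_weier hx0 hx k hk
      have hxk : 0 < x ^ k := pow_pos hx0 k
      linarith
  have hqk : (0:ℝ) < (q:ℝ)^(k*k) := by positivity
  nlinarith

theorem stmt11 (F : Type*) [Field F] [Fintype F] (n m d : ℕ)
    (hn : 0 < n) (hm : 0 < m) (hd : 0 < d)
    (M : Matrix (Fin n) (Fin m) F) (t : ℤ) (ht : t ≤ min (M.rank : ℤ) (d : ℤ)) :
    (Nat.card {X : Matrix (Fin d) (Fin n) F // ((X * M).rank : ℤ) ≤ t} : ℝ) /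
        (Fintype.card (Matrix (Fin d) (Fin n) F) : ℝ) ≤
      4 * (Fintype.card F : ℝ) ^ (-(((M.rank : ℤ) - t) * ((d : ℤ) - t))) := by
  classical
  have hq : 2 ≤ Fintype.card F := Fintype.one_lt_card
  have hq0 : (0:ℝ) < (Fintype.card F : ℝ) := by positivity
  have hcardMat : (0:ℝ) < (Fintype.card (Matrix (Fin d) (Fin n) F) : ℝ) := by
    have := Fintype.card_pos (α := Matrix (Fin d) (Fin n) F)
    positivity
  rcases lt_or_ge t 0 with htneg | ht0
  · have hEmpty : IsEmpty {X : Matrix (Fin d) (Fin n) F // ((X * M).rank : ℤ) ≤ t} := by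
      constructor
      rintro ⟨X, hX⟩
      have : (0:ℤ) ≤ ((X * M).rank : ℤ) := Int.natCast_nonneg _
      omega
    rw [Nat.card_of_isEmpty, Nat.cast_zero, zero_div]
    positivity
  obtain ⟨k, rfl⟩ : ∃ k : ℕ, (k:ℤ) = t := ⟨t.toNat, Int.toNat_of_nonneg ht0⟩
  have hkr : k ≤ M.rank := by exact_mod_cast (le_min_iff.1 ht).1
  have hkd : k ≤ d := by exact_mod_cast (le_min_iff.1 ht).2
  set q := Fintype.card F with hqdef
  set V := LinearMap.range M.mulVecLin with hV
  have hrV : finrank F V = M.rank := rfl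
  have hfd : finrank F (Fin d → F) = d := by
    simp [Module.finrank_fintype_fun_eq_card]
  have hrank : ∀ X : Matrix (Fin d) (Fin n) F,
      (X * M).rank = finrank F (Submodule.map X.mulVecLin V) := by
    intro X
    rw [Matrix.rank, Matrix.mulVecLin_mul, LinearMap.range_comp]
  haveI : Finite (Submodule F (Fin d → F)) :=
    Finite.of_injective _ SetLike.coe_injective
  haveI : Fintype {W : Submodule F (Fin d → F) // finrank F W = k} := Fintype.ofFinite _
  -- injection into the sigma type
  have hex : ∀ X : {X : Matrix (Fin d) (Fin n) F // ((X * M).rank : ℤ) ≤ (k:ℤ)},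
      ∃ W : Submodule F (Fin d → F),
        Submodule.map X.1.mulVecLin V ≤ W ∧ finrank F W = k := by
    intro X
    have h1 : finrank F (Submodule.map X.1.mulVecLin V) ≤ k := by
      rw [← hrank X.1]
      exact_mod_cast X.2
    exact stmt11_ext (k - finrank F (Submodule.map X.1.mulVecLin V))
      (Submodule.map X.1.mulVecLin V) k h1 (by omega) rfl
  let f : {X : Matrix (Fin d) (Fin n) F // ((X * M).rank : ℤ) ≤ (k:ℤ)} →
      Σ W : {W : Submodule F (Fin d → F) // finrank F W = k},
        {X : Matrix (Fin d) (Fin n) F // Submodule.map X.mulVecLin V ≤ W.1} := fun X =>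
    ⟨⟨(hex X).choose, (hex X).choose_spec.2⟩, X.1, (hex X).choose_spec.1⟩
  have hf : Function.Injective f := by
    intro a b h
    exact Subtype.ext (congrArg (fun p => p.2.1) h)
  have card_le := Nat.card_le_card_of_injective f hf
  -- sigma card
  have hsig : Nat.card (Σ W : {W : Submodule F (Fin d → F) // finrank F W = k},
      {X : Matrix (Fin d) (Fin n) F // Submodule.map X.mulVecLin V ≤ W.1}) =
      ∑ W : {W : Submodule F (Fin d → F) // finrank F W = k},
        Nat.card {X : Matrix (Fin d) (Fin n) F // Submodule.map X.mulVecLin V ≤ W.1} := by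
    rw [Nat.card_eq_fintype_card, Fintype.card_sigma]
    simp [Nat.card_eq_fintype_card]
  have hcount : ∀ W : {W : Submodule F (Fin d → F) // finrank F W = k},
      Nat.card {X : Matrix (Fin d) (Fin n) F // Submodule.map X.mulVecLin V ≤ W.1} *
        q ^ (M.rank * (d - k)) = q ^ (d * n) := by
    intro W
    have h1 := stmt11_count V W.1
    have h2 : finrank F ((Fin d → F) ⧸ W.1) = d - k := by
      have := Submodule.finrank_quotient_add_finrank W.1
      rw [W.2, hfd] at this
      omega
    rwa [h2, hrV] at h1
  set N := Nat.card {X : Matrix (Fin d) (Fin n) F // ((X * M).rank : ℤ) ≤ (k:ℤ)} with hN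
  set G := Nat.card {W : Submodule F (Fin d → F) // finrank F W = k} with hG
  have hA : N * q ^ (M.rank * (d - k)) ≤ G * q ^ (d * n) := by
    calc N * q ^ (M.rank * (d - k))
        ≤ (∑ W : {W : Submodule F (Fin d → F) // finrank F W = k},
            Nat.card {X : Matrix (Fin d) (Fin n) F // Submodule.map X.mulVecLin V ≤ W.1}) *
            q ^ (M.rank * (d - k)) :=
          Nat.mul_le_mul_right _ (card_le.trans_eq hsig)
      _ = ∑ W : {W : Submodule F (Fin d → F) // finrank F W = k},
            (Nat.card {X : Matrix (Fin d) (Fin n) F // Submodule.map X.mulVecLin V ≤ W.1} *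
              q ^ (M.rank * (d - k))) := Finset.sum_mul _ _ _
      _ = ∑ _W : {W : Submodule F (Fin d → F) // finrank F W = k}, q ^ (d * n) :=
          Finset.sum_congr rfl fun W _ => hcount W
      _ = G * q ^ (d * n) := by
          rw [Finset.sum_const, Finset.card_univ, smul_eq_mul, hG, Nat.card_eq_fintype_card]
  have hB : G * ∏ i : Fin k, (q ^ k - q ^ (i : ℕ)) ≤ q ^ (d * k) := stmt11_grass hkd
  have hC : (q:ℝ) ^ (k*k) ≤ 4 * ((∏ i : Fin k, (q ^ k - q ^ (i : ℕ)) : ℕ) : ℝ) :=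
    stmt11_prod hq k
  set P := (∏ i : Fin k, (q ^ k - q ^ (i : ℕ)) : ℕ) with hP
  have hPpos : 0 < P := by
    rw [hP]
    refine Finset.prod_pos fun i _ => ?_
    have : q ^ (i:ℕ) < q ^ k := Nat.pow_lt_pow_right (by omega) i.isLt
    omega
  -- pass to the reals
  have hAR : (N:ℝ) * (q:ℝ) ^ (M.rank * (d - k)) ≤ (G:ℝ) * (q:ℝ) ^ (d * n) := by
    exact_mod_cast hA
  have hBR : (G:ℝ) * (P:ℝ) ≤ (q:ℝ) ^ (d * k) := by exact_mod_cast hB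
  have hPR : (0:ℝ) < (P:ℝ) := by exact_mod_cast hPpos
  set e := (M.rank - k) * (d - k) with he
  have hid : M.rank * (d - k) + k * k = d * k + e := by
    rw [he]
    zify [hkr, hkd]
    ring
  have big : (N:ℝ) * (q:ℝ) ^ (M.rank * (d - k)) * (q:ℝ) ^ (k*k) ≤
      4 * (q:ℝ) ^ (d * n) * (q:ℝ) ^ (d * k) := by
    calc (N:ℝ) * (q:ℝ) ^ (M.rank * (d - k)) * (q:ℝ) ^ (k*k)
        ≤ (G:ℝ) * (q:ℝ) ^ (d * n) * (q:ℝ) ^ (k*k) := by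
          apply mul_le_mul_of_nonneg_right hAR
          positivity
      _ ≤ (G:ℝ) * (q:ℝ) ^ (d * n) * (4 * (P:ℝ)) := by
          apply mul_le_mul_of_nonneg_left hC
          positivity
      _ = 4 * (q:ℝ) ^ (d * n) * ((G:ℝ) * (P:ℝ)) := by ring
      _ ≤ 4 * (q:ℝ) ^ (d * n) * (q:ℝ) ^ (d * k) := by
          apply mul_le_mul_of_nonneg_left hBR
          positivity
  have key : (N:ℝ) * (q:ℝ) ^ e ≤ 4 * (q:ℝ) ^ (d * n) := by
    have hqdk : (0:ℝ) < (q:ℝ) ^ (d * k) := by positivity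
    apply le_of_mul_le_mul_right _ hqdk
    calc (N:ℝ) * (q:ℝ) ^ e * (q:ℝ) ^ (d * k)
        = (N:ℝ) * (q:ℝ) ^ (M.rank * (d - k)) * (q:ℝ) ^ (k*k) := by
          rw [mul_assoc, ← pow_add, mul_assoc, ← pow_add]
          congr 2
          omega
      _ ≤ 4 * (q:ℝ) ^ (d * n) * (q:ℝ) ^ (d * k) := big
  -- rewrite the goal
  have hMat : (Fintype.card (Matrix (Fin d) (Fin n) F) : ℝ) = (q:ℝ) ^ (d * n) := by
    have h4 : Nat.card (Matrix (Fin d) (Fin n) F) = q ^ (d * n) := by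
      rw [stmt11_card (F := F), Module.finrank_matrix]
      simp [mul_comm, hqdef]
    rw [← Nat.card_eq_fintype_card]
    exact_mod_cast h4
  have hexp : (-(((M.rank : ℤ) - (k:ℤ)) * ((d : ℤ) - (k:ℤ)))) = -(e:ℤ) := by
    rw [he]
    rw [Nat.cast_mul, Nat.cast_sub hkr, Nat.cast_sub hkd]
  rw [hexp, hMat, _root_.zpow_neg, zpow_natCast, ← div_eq_mul_inv,
    div_le_div_iff₀ (by positivity) (by positivity)]
  exact key
end

section
/- Let r ≤ min{s,t} be nonnegative integers and m ≥ 0 an integer, and let A be an s×t matrix over F_q of rank r. The number of matrices B ∈ F_q^{s×m} such that the s×(t+m) block matrix [A B] has rank s equals q^{rm} times the number of (s−r)×m matrices over F_q of rank s−r. -/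
open Matrix LinearMap Module Submodule

private lemma rank_top_iff {F : Type*} [Field F] {k : ℕ} {n : Type*} [Fintype n]
    (M : Matrix (Fin k) n F) :
    M.rank = k ↔ LinearMap.range M.mulVecLin = ⊤ := by
  unfold Matrix.rank
  constructor
  · intro h
    apply Submodule.eq_top_of_finrank_eq
    rw [h, Module.finrank_fin_fun]
  · intro h
    rw [h, finrank_top, Module.finrank_fin_fun]

theorem stmt17 (F : Type*) [Field F] [Fintype F] (s t m r : ℕ) (hrs : r ≤ s) (hrt : r ≤ t)
    (A : Matrix (Fin s) (Fin t) F) (hA : A.rank = r) :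
    Nat.card {B : Matrix (Fin s) (Fin m) F // (Matrix.fromCols A B).rank = s} =
      Fintype.card F ^ (r * m) *
        Nat.card {C : Matrix (Fin (s - r)) (Fin m) F // C.rank = s - r} := by
  classical
  set V : Submodule F (Fin s → F) := LinearMap.range A.mulVecLin with hVdef
  have hVr : finrank F V = r := hA
  have hs : finrank F (Fin s → F) = s := Module.finrank_fin_fun F
  have hq : finrank F ((Fin s → F) ⧸ V) = s - r := by
    have h := Submodule.finrank_quotient_add_finrank V
    omega
  let e : ((Fin s → F) ⧸ V) ≃ₗ[F] (Fin (s - r) → F) :=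
    (Module.finBasisOfFinrankEq F _ hq).equivFun
  let g : (Fin s → F) →ₗ[F] (Fin (s - r) → F) := e.toLinearMap ∘ₗ V.mkQ
  have hg_surj : Function.Surjective g := e.surjective.comp V.mkQ_surjective
  have hgker : ∀ x, g x = 0 ↔ x ∈ V := by
    intro x
    simp only [g, LinearMap.comp_apply, LinearEquiv.coe_coe, Submodule.mkQ_apply,
      LinearEquiv.map_eq_zero_iff, Submodule.Quotient.mk_eq_zero]
  have htl : ∀ {a b : ℕ} (M : Matrix (Fin a) (Fin b) F), Matrix.toLin' M = M.mulVecLin :=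
    fun M => LinearMap.ext fun v => by rw [Matrix.toLin'_apply, Matrix.mulVecLin_apply]
  let L : Matrix (Fin s) (Fin m) F →ₗ[F] Matrix (Fin (s - r)) (Fin m) F :=
    (LinearMap.toMatrix' : ((Fin m → F) →ₗ[F] (Fin (s - r) → F)) ≃ₗ[F] _).toLinearMap ∘ₗ
      (LinearMap.llcomp F (Fin m → F) (Fin s → F) (Fin (s - r) → F) g) ∘ₗ
        (Matrix.toLin' : Matrix (Fin s) (Fin m) F ≃ₗ[F] _).toLinearMap
  have hLB : ∀ B, L B = LinearMap.toMatrix' (g ∘ₗ B.mulVecLin) := by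
    intro B
    simp only [L, LinearMap.comp_apply, LinearEquiv.coe_coe, LinearMap.llcomp_apply, htl B]
    rfl
  have hL_surj : Function.Surjective L := by
    intro C
    obtain ⟨h, hh⟩ := Module.projective_lifting_property g (Matrix.toLin' C) hg_surj
    refine ⟨LinearMap.toMatrix' h, ?_⟩
    rw [hLB, ← htl, Matrix.toLin'_toMatrix', hh, LinearMap.toMatrix'_toLin']
  -- range of the block matrix
  have hrange : ∀ B : Matrix (Fin s) (Fin m) F,
      LinearMap.range (Matrix.fromCols A B).mulVecLin = V ⊔ LinearMap.range B.mulVecLin := by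
    intro B
    apply le_antisymm
    · rintro _ ⟨x, rfl⟩
      rw [Matrix.mulVecLin_apply, ← Sum.elim_comp_inl_inr x, Matrix.fromCols_mulVec_sumElim]
      exact Submodule.add_mem_sup ⟨x ∘ Sum.inl, rfl⟩ ⟨x ∘ Sum.inr, rfl⟩
    · refine sup_le ?_ ?_
      · rintro _ ⟨x, rfl⟩
        exact ⟨Sum.elim x 0, by simp [Matrix.mulVecLin_apply]⟩
      · rintro _ ⟨x, rfl⟩
        exact ⟨Sum.elim 0 x, by simp [Matrix.mulVecLin_apply]⟩
  -- key equivalence of conditions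
  have hcond : ∀ B : Matrix (Fin s) (Fin m) F,
      (Matrix.fromCols A B).rank = s ↔ (L B).rank = s - r := by
    intro B
    rw [rank_top_iff, rank_top_iff, hrange]
    have hLm : (L B).mulVecLin = g ∘ₗ B.mulVecLin := by
      rw [← htl, hLB, Matrix.toLin'_toMatrix']
    rw [hLm, LinearMap.range_eq_top]
    constructor
    · intro h y
      obtain ⟨x, hx⟩ := hg_surj y
      have hxmem : x ∈ V ⊔ LinearMap.range B.mulVecLin := h ▸ Submodule.mem_top
      obtain ⟨v, hv, w, hw, rfl⟩ := Submodule.mem_sup.mp hxmem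
      obtain ⟨u, rfl⟩ := hw
      refine ⟨u, ?_⟩
      have hv0 : g v = 0 := (hgker v).mpr hv
      simpa [map_add, hv0] using hx
    · intro h
      rw [eq_top_iff]
      intro x _
      obtain ⟨u, hu⟩ := h (g x)
      have hmem : x - B.mulVecLin u ∈ V := by
        refine (hgker _).mp ?_
        rw [map_sub]
        simp only [LinearMap.comp_apply] at hu
        rw [hu, sub_self]
      have := Submodule.add_mem_sup hmem (LinearMap.mem_range_self B.mulVecLin u)
      simpa using this
  -- kernel description
  have hker : ∀ B : Matrix (Fin s) (Fin m) F,
      B ∈ LinearMap.ker L ↔ ∀ x, B.mulVecLin x ∈ V := by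
    intro B
    rw [LinearMap.mem_ker, hLB, LinearEquiv.map_eq_zero_iff]
    constructor
    · intro h x
      have : g (B.mulVecLin x) = 0 := by
        rw [← LinearMap.comp_apply, h, LinearMap.zero_apply]
      exact (hgker _).mp this
    · intro h
      apply LinearMap.ext
      intro x
      rw [LinearMap.comp_apply, LinearMap.zero_apply]
      exact (hgker _).mpr (h x)
  have col_mem : ∀ B : Matrix (Fin s) (Fin m) F,
      (∀ x, B.mulVecLin x ∈ V) ↔ ∀ j, (fun i => B i j) ∈ V := by
    intro B
    constructor
    · intro h j
      have := h (Pi.single j 1)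
      rwa [Matrix.mulVecLin_apply, Matrix.mulVec_single_one] at this
    · intro h x
      rw [Matrix.mulVecLin_apply]
      have hsum : B *ᵥ x = ∑ j, x j • (fun i => B i j) := by
        ext i
        simp [Matrix.mulVec, dotProduct, Finset.sum_apply, mul_comm]
      rw [hsum]
      exact Submodule.sum_mem _ fun j _ => Submodule.smul_mem _ _ (h j)
  -- kernel cardinality
  let kE : (LinearMap.ker L) ≃ (Fin m → V) :=
  { toFun := fun K j => ⟨fun i => K.1 i j, ((col_mem K.1).mp ((hker K.1).mp K.2)) j⟩
    invFun := fun f => ⟨Matrix.of fun i j => (f j).1 i,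
      (hker _).mpr ((col_mem _).mpr fun j => by simpa using (f j).2)⟩
    left_inv := fun K => Subtype.ext (by ext i j; rfl)
    right_inv := fun f => by funext j; apply Subtype.ext; rfl }
  have hVcard : Nat.card V = Fintype.card F ^ r := by
    letI : Fintype V := Fintype.ofFinite V
    rw [Nat.card_eq_fintype_card, card_eq_pow_finrank (K := F) (V := V), hVr]
  have hkerCard : Nat.card (LinearMap.ker L) = Fintype.card F ^ (r * m) := by
    rw [Nat.card_congr kE, Nat.card_pi, Finset.prod_const, Finset.card_univ, Fintype.card_fin,
      hVcard, ← pow_mul]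
  -- the section of L
  obtain ⟨σ, hσ⟩ := Module.projective_lifting_property L LinearMap.id hL_surj
  have hσ' : ∀ C, L (σ C) = C := fun C => by
    have := DFunLike.congr_fun hσ C
    simpa using this
  -- main equivalence
  let E : {B : Matrix (Fin s) (Fin m) F // (L B).rank = s - r} ≃
      {C : Matrix (Fin (s - r)) (Fin m) F // C.rank = s - r} × (LinearMap.ker L) :=
  { toFun := fun B => (⟨L B.1, B.2⟩, ⟨B.1 - σ (L B.1), by
      rw [LinearMap.mem_ker, map_sub, hσ' (L B.1), sub_self]⟩)
    invFun := fun P => ⟨σ P.1.1 + P.2.1, by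
      have hL2 : L (σ P.1.1 + P.2.1) = P.1.1 := by
        rw [map_add, hσ', LinearMap.mem_ker.mp P.2.2, add_zero]
      rw [hL2]; exact P.1.2⟩
    left_inv := fun B => Subtype.ext (by
      simp only []
      rw [add_comm, sub_add_cancel])
    right_inv := fun P => by
      have hL2 : L (σ P.1.1 + P.2.1) = P.1.1 := by
        rw [map_add, hσ', LinearMap.mem_ker.mp P.2.2, add_zero]
      refine Prod.ext ?_ ?_
      · exact Subtype.ext hL2
      · apply Subtype.ext
        simp only [hL2]
        rw [add_sub_cancel_left] }
  calc Nat.card {B : Matrix (Fin s) (Fin m) F // (Matrix.fromCols A B).rank = s}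
      = Nat.card {B : Matrix (Fin s) (Fin m) F // (L B).rank = s - r} :=
        Nat.card_congr (Equiv.subtypeEquivRight hcond)
    _ = Nat.card ({C : Matrix (Fin (s - r)) (Fin m) F // C.rank = s - r} × (LinearMap.ker L)) :=
        Nat.card_congr E
    _ = Nat.card {C : Matrix (Fin (s - r)) (Fin m) F // C.rank = s - r} *
          Nat.card (LinearMap.ker L) := Nat.card_prod _ _
    _ = _ := by rw [hkerCard]; ring
end

section
/- For any integers n ≥ 1 and s, t ∈ {0,1,…,n}, the sum ∑_{r = max{0, s+t−n}}^{∞} q^{−(s−r)(t−r) + binom(r,2) − nr} is at most 2·q^{−st/2}, for any real q ≥ 2. -/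
/-- The exponent `A(r) = -(s-r)(t-r) + binom(r,2) - n*r`. -/
def expA (n s t r : ℕ) : ℤ :=
  -(((s : ℤ) - (r : ℤ)) * ((t : ℤ) - (r : ℤ))) + (r.choose 2 : ℤ) - (n : ℤ) * (r : ℤ)

lemma two_choose_two (r : ℕ) : 2 * (r.choose 2 : ℤ) = r * (r - 1) := by
  induction r with
  | zero => simp
  | succ k ih =>
    rw [Nat.choose_succ_succ]
    push_cast [Nat.choose_one_right]
    push_cast at ih
    linarith [ih]

lemma expA_succ (n s t r : ℕ) :
    expA n s t (r + 1) = expA n s t r + ((s : ℤ) + t - n - r - 1) := by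
  have h : ((r + 1).choose 2 : ℤ) = (r.choose 2 : ℤ) + r := by
    rw [Nat.choose_succ_succ]
    push_cast [Nat.choose_one_right]
    ring
  simp only [expA]
  push_cast
  rw [h]
  ring

lemma expA_step (n s t : ℕ) (i : ℕ) :
    expA n s t (s + t - n + i) ≤ expA n s t (s + t - n) - i := by
  induction i with
  | zero => simp
  | succ k ih =>
    have h := expA_succ n s t (s + t - n + k)
    have hr : (s : ℤ) + t - n - ((s + t - n + k : ℕ) : ℤ) - 1 ≤ -(k + 1) := by
      push_cast
      omega
    have : expA n s t (s + t - n + (k + 1)) = expA n s t (s + t - n + k) +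
        ((s : ℤ) + t - n - ((s + t - n + k : ℕ) : ℤ) - 1) := by
      rw [show s + t - n + (k + 1) = (s + t - n + k) + 1 by ring, h]
    rw [this]
    push_cast at ih hr ⊢
    linarith

lemma expA_bound (n s t : ℕ) (hs : s ≤ n) (ht : t ≤ n) :
    2 * expA n s t (s + t - n) ≤ -((s : ℤ) * t) := by
  have hc := two_choose_two (s + t - n)
  unfold expA
  by_cases h : s + t ≤ n
  · have h0 : s + t - n = 0 := by omega
    rw [h0]
    simp
    nlinarith [Int.natCast_nonneg s, Int.natCast_nonneg t]
  · have h1 : ((s + t - n : ℕ) : ℤ) = (s : ℤ) + t - n := by omega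
    rw [h1] at hc ⊢
    have hu0 : (0:ℤ) ≤ (s:ℤ) + t - n := by omega
    have hus : (s:ℤ) + t - n ≤ s := by omega
    have hut : (s:ℤ) + t - n ≤ t := by omega
    nlinarith [mul_le_mul hus hut hu0 (Int.natCast_nonneg s), hc]

theorem stmt18 (n s t : ℕ) (hn : 1 ≤ n) (hs : s ≤ n) (ht : t ≤ n) (q : ℝ) (hq : 2 ≤ q) :
    (Summable fun i : ℕ => q ^ expA n s t (s + t - n + i)) ∧
      (∑' i : ℕ, q ^ expA n s t (s + t - n + i)) ≤
        2 * q ^ (-((s : ℝ) * (t : ℝ)) / 2) := by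
  have hq0 : (0:ℝ) < q := by linarith
  have hq1 : (1:ℝ) ≤ q := by linarith
  set a := expA n s t (s + t - n) with ha
  have hfg : ∀ i : ℕ, q ^ expA n s t (s + t - n + i) ≤ q ^ a * q⁻¹ ^ i := by
    intro i
    have h1 : q ^ expA n s t (s + t - n + i) ≤ q ^ (a - (i:ℤ)) :=
      zpow_le_zpow_right₀ hq1 (expA_step n s t i)
    have h2 : q ^ (a - (i:ℤ)) = q ^ a * q⁻¹ ^ i := by
      rw [zpow_sub₀ (ne_of_gt hq0), zpow_natCast, div_eq_mul_inv, inv_pow]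
    rw [← h2]; exact h1
  have hinv : q⁻¹ < 1 := inv_lt_one_of_one_lt₀ (by linarith)
  have hinv0 : (0:ℝ) ≤ q⁻¹ := by positivity
  have hg : Summable (fun i : ℕ => q ^ a * q⁻¹ ^ i) :=
    (summable_geometric_of_lt_one hinv0 hinv).mul_left _
  have hf : Summable fun i : ℕ => q ^ expA n s t (s + t - n + i) :=
    Summable.of_nonneg_of_le (fun i => by positivity) hfg hg
  refine ⟨hf, ?_⟩
  have hsum : (∑' i : ℕ, q ^ expA n s t (s + t - n + i)) ≤ q ^ a * (1 - q⁻¹)⁻¹ := by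
    calc (∑' i : ℕ, q ^ expA n s t (s + t - n + i)) ≤ ∑' i : ℕ, q ^ a * q⁻¹ ^ i :=
          Summable.tsum_le_tsum hfg hf hg
      _ = q ^ a * (1 - q⁻¹)⁻¹ := by
          rw [tsum_mul_left, tsum_geometric_of_lt_one hinv0 hinv]
  have hqi : q⁻¹ ≤ 1/2 := by
    rw [inv_eq_one_div, div_le_div_iff₀ hq0 (by norm_num)]; linarith
  have h2 : (1 - q⁻¹)⁻¹ ≤ 2 := by
    have h3 : (1:ℝ)/2 ≤ 1 - q⁻¹ := by linarith
    calc (1 - q⁻¹)⁻¹ ≤ ((1:ℝ)/2)⁻¹ := by gcongr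
      _ = 2 := by norm_num
  have hAa : (a:ℝ) ≤ -((s:ℝ) * (t:ℝ)) / 2 := by
    have hb := expA_bound n s t hs ht
    have hb' : (2 * a : ℝ) ≤ -((s:ℝ) * (t:ℝ)) := by exact_mod_cast hb
    linarith
  have hza : q ^ a ≤ q ^ (-((s:ℝ) * (t:ℝ)) / 2) := by
    rw [← Real.rpow_intCast q a]
    exact Real.rpow_le_rpow_of_exponent_le hq1 hAa
  calc (∑' i : ℕ, q ^ expA n s t (s + t - n + i)) ≤ q ^ a * (1 - q⁻¹)⁻¹ := hsum
    _ ≤ q ^ (-((s:ℝ) * (t:ℝ)) / 2) * 2 := by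
        apply mul_le_mul hza h2 (inv_nonneg.mpr (by linarith)) (by positivity)
    _ = 2 * q ^ (-((s:ℝ) * (t:ℝ)) / 2) := by ring
end

section
/- Let n, m be nonnegative integers with m ≤ n/2 and q ≥ 2 a real number (or prime power). Define Λ_0(k) = (−1)^k · q^{binom(k,2) + m(m−k)} · binom(n−m−k, m−k)_q for k = 0, 1, …, m. Then the numbers |Λ_0(k)| form a strictly decreasing sequence in k; in particular, the Λ_0(k) are pairwise distinct. -/
/-- `Λ₀(k) = (-1)^k * q^(binom(k,2) + m(m-k)) * binom(n-m-k, m-k)_q`. -/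
noncomputable def lamZero (q : ℝ) (n m k : ℕ) : ℝ :=
  (-1 : ℝ) ^ k * q ^ (k.choose 2 + m * (m - k)) * gaussBinom q (n - m - k) (m - k)

lemma gauss_ge_one (q : ℝ) (hq : 2 ≤ q) {N M : ℕ} (h : M ≤ N) :
    1 ≤ gaussBinom q N M := by
  unfold gaussBinom
  have hterm : ∀ i ∈ Finset.range M, (1:ℝ) ≤ (q ^ (N - i) - 1) / (q ^ (M - i) - 1) := by
    intro i hi
    simp only [Finset.mem_range] at hi
    have hq1 : (1:ℝ) ≤ q := by linarith
    have h1 : (2:ℝ) ≤ q ^ (M - i) := by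
      calc (2:ℝ) ≤ q := hq
      _ = q ^ 1 := (pow_one q).symm
      _ ≤ q ^ (M - i) := pow_le_pow_right₀ hq1 (by omega)
    have h2 : q ^ (M - i) ≤ q ^ (N - i) := pow_le_pow_right₀ hq1 (by omega)
    rw [le_div_iff₀ (by linarith)]
    linarith
  calc (1:ℝ) = ∏ _i ∈ Finset.range M, (1:ℝ) := by simp
  _ ≤ ∏ i ∈ Finset.range M, (q ^ (N - i) - 1) / (q ^ (M - i) - 1) :=
      Finset.prod_le_prod (fun i _ => zero_le_one) hterm

lemma abs_lam_eq (q : ℝ) (hq : 2 ≤ q) (n m k : ℕ) (hm : 2 * m ≤ n) (hk : k ≤ m) :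
    |lamZero q n m k| = q ^ (k.choose 2 + m * (m - k)) * gaussBinom q (n - m - k) (m - k) := by
  have hG : 1 ≤ gaussBinom q (n - m - k) (m - k) := gauss_ge_one q hq (by omega)
  have hqp : (0:ℝ) < q ^ (k.choose 2 + m * (m - k)) := pow_pos (by linarith) _
  unfold lamZero
  rw [abs_mul, abs_mul, abs_pow, abs_neg, abs_one, one_pow, one_mul,
    abs_of_pos hqp, abs_of_pos (by linarith)]

lemma gauss_step (q : ℝ) (N M : ℕ) (hM : 1 ≤ M) :
    gaussBinom q N M = (q ^ N - 1) / (q ^ M - 1) * gaussBinom q (N - 1) (M - 1) := by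
  obtain ⟨M', rfl⟩ : ∃ M', M = M' + 1 := ⟨M - 1, by omega⟩
  unfold gaussBinom
  rw [Finset.prod_range_succ']
  simp only [Nat.sub_zero, Nat.add_sub_cancel]
  rw [mul_comm]
  congr 1
  apply Finset.prod_congr rfl
  intro i hi
  have h1 : N - (i + 1) = N - 1 - i := by omega
  have h2 : M' + 1 - (i + 1) = M' - i := by omega
  rw [h1, h2]

lemma lam_step (n m : ℕ) (hm : 2 * m ≤ n) (q : ℝ) (hq : 2 ≤ q) (k : ℕ) (hk : k < m) :
    |lamZero q n m (k + 1)| < |lamZero q n m k| := by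
  rw [abs_lam_eq q hq n m k hm (le_of_lt hk), abs_lam_eq q hq n m (k+1) hm (by omega)]
  set N := n - m - k with hN
  set M := m - k with hM
  have hMN : M ≤ N := by omega
  have hM1 : 1 ≤ M := by omega
  have hc : (k+1).choose 2 = k + k.choose 2 := by
    simp [Nat.choose_succ_succ, Nat.choose_one_right]
  have hmm : m * (m - k) = m * (m - (k+1)) + m := by
    rw [show m - k = (m - (k+1)) + 1 by omega]; ring
  have he : k.choose 2 + m * (m - k) = ((k+1).choose 2 + m * (m - (k+1))) + M := by
    omega
  have hstep : gaussBinom q N M = (q ^ N - 1) / (q ^ M - 1) * gaussBinom q (N-1) (M-1) :=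
    gauss_step q N M hM1
  have hN1 : n - m - (k+1) = N - 1 := by omega
  have hM1' : m - (k+1) = M - 1 := by omega
  rw [hN1, hM1', he, pow_add q ((k+1).choose 2 + m * (m - (k+1))) M, hstep]
  have hq1 : (1:ℝ) ≤ q := by linarith
  have hG : 1 ≤ gaussBinom q (N-1) (M-1) := gauss_ge_one q hq (by omega)
  have hqM : (2:ℝ) ≤ q ^ M := by
    calc (2:ℝ) ≤ q := hq
    _ = q ^ 1 := (pow_one q).symm
    _ ≤ q ^ M := pow_le_pow_right₀ hq1 hM1
  have hqNM : q ^ M ≤ q ^ N := pow_le_pow_right₀ hq1 hMN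
  have hrat : (1:ℝ) ≤ (q ^ N - 1) / (q ^ M - 1) := by
    rw [le_div_iff₀ (by linarith)]; linarith
  have hP : (0:ℝ) < q ^ ((k+1).choose 2 + m * (m - (k+1))) := pow_pos (by linarith) _
  have key : (1:ℝ) * 1 < q ^ M * ((q ^ N - 1) / (q ^ M - 1)) := by
    nlinarith [hqM, hrat]
  calc q ^ ((k+1).choose 2 + m * (m - (k+1))) * gaussBinom q (N-1) (M-1)
      = q ^ ((k+1).choose 2 + m * (m - (k+1))) * ((1:ℝ) * 1 * gaussBinom q (N-1) (M-1)) := by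
        ring
    _ < q ^ ((k+1).choose 2 + m * (m - (k+1))) *
          (q ^ M * ((q ^ N - 1) / (q ^ M - 1)) * gaussBinom q (N-1) (M-1)) := by
        apply mul_lt_mul_of_pos_left _ hP
        exact mul_lt_mul_of_pos_right key (by linarith)
    _ = q ^ ((k+1).choose 2 + m * (m - (k+1))) * q ^ M *
          ((q ^ N - 1) / (q ^ M - 1) * gaussBinom q (N-1) (M-1)) := by ring

theorem stmt19 (n m : ℕ) (hm : 2 * m ≤ n) (q : ℝ) (hq : 2 ≤ q) :
    (∀ k l : ℕ, k < l → l ≤ m → |lamZero q n m l| < |lamZero q n m k|) ∧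
      ∀ k l : ℕ, k ≤ m → l ≤ m → k ≠ l → lamZero q n m k ≠ lamZero q n m l := by
  have main : ∀ k l : ℕ, k < l → l ≤ m → |lamZero q n m l| < |lamZero q n m k| := by
    intro k l
    induction l with
    | zero => omega
    | succ l ih =>
      intro hkl hlm
      rcases Nat.lt_or_ge k l with h | h
      · exact lt_trans (lam_step n m hm q hq l (by omega)) (ih h (by omega))
      · have : k = l := by omega
        subst this
        exact lam_step n m hm q hq k (by omega)
  refine ⟨main, ?_⟩
  intro k l hk hl hne heq
  rcases Nat.lt_or_ge k l with h | h
  · have := main k l h hl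
    rw [heq] at this
    exact lt_irrefl _ this
  · have := main l k (by omega) hk
    rw [heq] at this
    exact lt_irrefl _ this
end
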